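/- arXiv:2402.04122 — 4 statements merged into one kernel-verified Lean document; each statement's English description precedes it below -/
import Mathlib

section
/- Vector field estimate for homogeneous polynomials. Let q ≥ 2, Q ∈ ℋ_{2q}(ℤ^d), and s ≥ 0. Then Q defines a smooth function on h^s ∩ ℓ¹, its gradient ∇Q is a smooth map from h^s ∩ ℓ¹ to h^s ∩ ℓ¹, and there is a constant C depending only on q and s such that for all u ∈ h^s ∩ ℓ¹: ‖∇Q(u)‖_{h^s} ≤ C ‖Q‖_∞ ‖u‖_{h^s} ‖u‖_{ℓ¹}^{2q−2}. -/
open scoped BigOperators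
open Finset

namespace NLSPaper

/-- `ℤ^d`. -/
abbrev Zd (d : ℕ) := Fin d → ℤ

/-- Euclidean norm `|n|` of a lattice point. -/
noncomputable def enorm {d : ℕ} (n : Zd d) : ℝ :=
  Real.sqrt (∑ i, ((n i : ℝ)) ^ 2)

/-- Japanese bracket `⟨n⟩ = (1+|n|²)^{1/2}`. -/
noncomputable def jap {d : ℕ} (n : Zd d) : ℝ :=
  Real.sqrt (1 + ∑ i, ((n i : ℝ)) ^ 2)

/-- `‖u‖_{h^s}²`. -/
noncomputable def hsNormSq {d : ℕ} (s : ℝ) (u : Zd d → ℂ) : ℝ :=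
  ∑' n : Zd d, jap n ^ (2 * s) * ‖u n‖ ^ 2

/-- `‖u‖_{h^s}`. -/
noncomputable def hsNorm {d : ℕ} (s : ℝ) (u : Zd d → ℂ) : ℝ :=
  Real.sqrt (hsNormSq s u)

/-- Membership in `h^s`. -/
def MemHs {d : ℕ} (s : ℝ) (u : Zd d → ℂ) : Prop :=
  Summable fun n : Zd d => jap n ^ (2 * s) * ‖u n‖ ^ 2

/-- `‖u‖_{ℓ¹}`. -/
noncomputable def l1Norm {d : ℕ} (u : Zd d → ℂ) : ℝ := ∑' n : Zd d, ‖u n‖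

/-- `‖u‖_{ℓ¹_σ}`. -/
noncomputable def l1sNorm {d : ℕ} (σ : ℝ) (u : Zd d → ℂ) : ℝ :=
  ∑' n : Zd d, jap n ^ σ * ‖u n‖

/-- Membership in `ℓ¹`. -/
def MemL1 {d : ℕ} (u : Zd d → ℂ) : Prop := Summable fun n : Zd d => ‖u n‖

/-- Projection `Π_𝒜` (restriction to `𝒜`, extension by `0`). -/
noncomputable def proj {d : ℕ} (A : Set (Zd d)) (u : Zd d → ℂ) : Zd d → ℂ :=
  A.indicator u

/-- `Π_M`, restriction to `{|n| ≤ M}`. -/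
noncomputable def projLE {d : ℕ} (M : ℝ) (u : Zd d → ℂ) : Zd d → ℂ :=
  proj {n | enorm n ≤ M} u

/-- `Π_{≥N}`, restriction to `{|n| ≥ N}`. -/
noncomputable def projGE {d : ℕ} (N : ℝ) (u : Zd d → ℂ) : Zd d → ℂ :=
  proj {n | N ≤ enorm n} u

/-- The bilinear form `g(a,b) = aᵀ G b`. -/
noncomputable def gform {d : ℕ} (G : Matrix (Fin d) (Fin d) ℝ) (a b : Zd d) : ℝ :=
  ∑ i, ∑ j, (a i : ℝ) * G i j * (b j : ℝ)

/-- The frequencies `λ_n² = g(n,n)`. -/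
noncomputable def lam2 {d : ℕ} (G : Matrix (Fin d) (Fin d) ℝ) (n : Zd d) : ℝ :=
  gform G n n

/-- Admissibility of the flat torus determined by `G`: `|g(a,b)| ≥ C |a|^{−τ} |b|^{−τ}`
for all nonzero `a, b ∈ ℤ^d`. -/
def IsAdmissible {d : ℕ} (G : Matrix (Fin d) (Fin d) ℝ) (C τ : ℝ) : Prop :=
  0 < C ∧ 0 < τ ∧ ∀ a b : Zd d, a ≠ 0 → b ≠ 0 →
    C / (enorm a ^ τ * enorm b ^ τ) ≤ |gform G a b|

/-- Resonance function `Ω_{n⃗} = Σᵢ (−1)^{i+1} λ_{n_i}²` (0-based: even indices positive). -/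
noncomputable def Omega {d : ℕ} (G : Matrix (Fin d) (Fin d) ℝ) {q : ℕ}
    (nvec : Fin q → Zd d) : ℝ :=
  ∑ i : Fin q, (-1 : ℝ) ^ (i : ℕ) * lam2 G (nvec i)

/-- Zero momentum condition `Σᵢ (−1)^i n_i = 0`. -/
def ZeroMom {d q : ℕ} (nvec : Fin q → Zd d) : Prop :=
  ∑ i : Fin q, ((-1 : ℤ) ^ (i : ℕ)) • nvec i = 0

/-- The monomial `u_{n₁} ū_{n₂} u_{n₃} ⋯` (0-based even positions unconjugated). -/
noncomputable def mono {d q : ℕ} (u : Zd d → ℂ) (nvec : Fin q → Zd d) : ℂ :=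
  ∏ i : Fin q, if (i : ℕ) % 2 = 0 then u (nvec i) else (starRingEnd ℂ) (u (nvec i))

/-- The class `ℋ_{2q}(𝒜)` of real homogeneous polynomials of degree `2q`
supported on `𝒜`, represented by their coefficients. -/
structure HomPoly (d q : ℕ) (A : Set (Zd d)) where
  coef : (Fin (2 * q) → Zd d) → ℂ
  symm : ∀ σ : Equiv.Perm (Fin (2 * q)), (∀ i, ((σ i : ℕ)) % 2 = (i : ℕ) % 2) →
    ∀ nvec, coef (fun i => nvec (σ i)) = coef nvec
  reality : ∀ nvec, coef nvec =
    (starRingEnd ℂ) (coef fun i => nvec ((finRotate (2 * q)).symm i))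
  bdd : BddAbove (Set.range fun nvec => ‖coef nvec‖)
  zeroMom : ∀ nvec, coef nvec ≠ 0 → ZeroMom nvec
  supp : ∀ nvec, coef nvec ≠ 0 → ∀ i, nvec i ∈ A

/-- `‖Q‖_∞`, the sup of the moduli of the coefficients. -/
noncomputable def HomPoly.normInf {d q : ℕ} {A : Set (Zd d)} (Q : HomPoly d q A) : ℝ :=
  ⨆ nvec, ‖Q.coef nvec‖

/-- Evaluation of a homogeneous polynomial. -/
noncomputable def HomPoly.eval {d q : ℕ} {A : Set (Zd d)} (Q : HomPoly d q A)
    (u : Zd d → ℂ) : ℂ :=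
  ∑' nvec : Fin (2 * q) → Zd d, Q.coef nvec * mono u nvec

/-- The gradient `(∇Q(u))_k = 2 ∂_{ū_k} Q(u)`. -/
noncomputable def HomPoly.grad {d q : ℕ} {A : Set (Zd d)} (Q : HomPoly d q A)
    (u : Zd d → ℂ) (k : Zd d) : ℂ :=
  2 * ∑' nvec : Fin (2 * q) → Zd d, ∑ j : Fin (2 * q),
    if (j : ℕ) % 2 = 1 ∧ nvec j = k then
      Q.coef nvec * ∏ i ∈ Finset.univ.erase j,
        (if (i : ℕ) % 2 = 0 then u (nvec i) else (starRingEnd ℂ) (u (nvec i)))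
    else 0

/-- `κ`-resonance: the coefficients vanish as soon as `|Ω_{n⃗}| > κ`. -/
def IsResonant {d q : ℕ} {A : Set (Zd d)} (G : Matrix (Fin d) (Fin d) ℝ) (κ : ℝ)
    (Q : HomPoly d q A) : Prop :=
  ∀ nvec, κ < |Omega G nvec| → Q.coef nvec = 0


section Helpers
open scoped ENNReal NNReal Classical


variable {d : ℕ}

lemma one_le_jap (n : Zd d) : 1 ≤ jap n := by
  rw [jap]
  have h : (1:ℝ) ≤ 1 + ∑ i, ((n i : ℝ)) ^ 2 :=
    le_add_of_nonneg_right (Finset.sum_nonneg fun i _ => sq_nonneg _)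
  calc (1:ℝ) = Real.sqrt 1 := by simp
    _ ≤ _ := Real.sqrt_le_sqrt h

lemma jap_nonneg (n : Zd d) : 0 ≤ jap n := le_trans zero_le_one (one_le_jap n)

lemma jap_pos (n : Zd d) : 0 < jap n := lt_of_lt_of_le zero_lt_one (one_le_jap n)

lemma key_sqrt_ineq {x y : ℝ} (hx : 0 ≤ x) (hy : 0 ≤ y) :
    Real.sqrt (1 + (x + y) ^ 2) ≤ Real.sqrt (1 + x ^ 2) + Real.sqrt (1 + y ^ 2) := by
  set A := Real.sqrt (1 + x ^ 2) with hA
  set B := Real.sqrt (1 + y ^ 2) with hB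
  have hA2 : A ^ 2 = 1 + x ^ 2 := Real.sq_sqrt (by positivity)
  have hB2 : B ^ 2 = 1 + y ^ 2 := Real.sq_sqrt (by positivity)
  have hAx : x ≤ A := by
    rw [hA]; nlinarith [Real.sqrt_le_sqrt (show x^2 ≤ 1 + x^2 by nlinarith), Real.sqrt_sq hx]
  have hBy : y ≤ B := by
    rw [hB]; nlinarith [Real.sqrt_le_sqrt (show y^2 ≤ 1 + y^2 by nlinarith), Real.sqrt_sq hy]
  have hA0 : 0 ≤ A := Real.sqrt_nonneg _
  have hB0 : 0 ≤ B := Real.sqrt_nonneg _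
  calc Real.sqrt (1 + (x + y) ^ 2) ≤ Real.sqrt ((A + B) ^ 2) := by
        apply Real.sqrt_le_sqrt; nlinarith
    _ = A + B := Real.sqrt_sq (by linarith)

noncomputable def toEuc (a : Zd d) : EuclideanSpace ℝ (Fin d) := WithLp.toLp 2 (fun i => (a i : ℝ))

lemma jap_eq_toEuc (a : Zd d) : jap a = Real.sqrt (1 + ‖toEuc a‖ ^ 2) := by
  rw [jap, EuclideanSpace.norm_eq, Real.sq_sqrt (by positivity)]
  congr 1; congr 1; apply Finset.sum_congr rfl; intro i _
  rw [toEuc, PiLp.toLp_apply]; rw [Real.norm_eq_abs, sq_abs]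

lemma jap_add_le (a b : Zd d) : jap (a + b) ≤ jap a + jap b := by
  have h1 : toEuc (a + b) = toEuc a + toEuc b := by
    ext i; simp [toEuc]
  rw [jap_eq_toEuc, jap_eq_toEuc, jap_eq_toEuc, h1]
  calc Real.sqrt (1 + ‖toEuc a + toEuc b‖ ^ 2)
      ≤ Real.sqrt (1 + (‖toEuc a‖ + ‖toEuc b‖) ^ 2) := by
        apply Real.sqrt_le_sqrt
        have := norm_add_le (toEuc a) (toEuc b)
        nlinarith [norm_nonneg (toEuc a + toEuc b), norm_nonneg (toEuc a), norm_nonneg (toEuc b)]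
    _ ≤ _ := key_sqrt_ineq (norm_nonneg _) (norm_nonneg _)

lemma jap_neg_one_pow_smul (m : ℕ) (a : Zd d) : jap (((-1 : ℤ) ^ m) • a) = jap a := by
  rw [jap, jap]; congr 2; apply Finset.sum_congr rfl; intro i _
  have : (((-1 : ℤ) ^ m • a) i : ℝ) = ((-1 : ℝ) ^ m) * (a i : ℝ) := by
    simp [Pi.smul_apply, smul_eq_mul]
  rw [this, mul_pow, ← pow_mul, mul_comm m 2, pow_mul]; norm_num

lemma jap_sum_le {ι : Type*} {t : Finset ι} (ht : t.Nonempty) (f : ι → Zd d) :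
    jap (∑ i ∈ t, f i) ≤ ∑ i ∈ t, jap (f i) := by
  induction ht using Finset.Nonempty.cons_induction with
  | singleton i => simp
  | cons i t hi ht ih =>
      rw [Finset.sum_cons, Finset.sum_cons]
      exact le_trans (jap_add_le _ _) (by gcongr)

lemma sum_rpow_le {ι : Type*} {t : Finset ι} (ht : t.Nonempty) (x : ι → ℝ)
    (hx : ∀ i ∈ t, 1 ≤ x i) {s : ℝ} (hs : 0 ≤ s) :
    (∑ i ∈ t, x i) ^ s ≤ (t.card : ℝ) ^ s * ∑ i ∈ t, x i ^ s := by
  obtain ⟨i0, hi0, hmax⟩ := Finset.exists_max_image t x ht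
  have hx0 : ∀ i ∈ t, (0:ℝ) ≤ x i := fun i hi => le_trans zero_le_one (hx i hi)
  calc (∑ i ∈ t, x i) ^ s ≤ ((t.card : ℝ) * x i0) ^ s := by
        apply Real.rpow_le_rpow (Finset.sum_nonneg hx0) _ hs
        have := Finset.sum_le_card_nsmul t x (x i0) hmax
        simpa [nsmul_eq_mul] using this
    _ = (t.card : ℝ) ^ s * (x i0) ^ s := Real.mul_rpow (by positivity) (le_trans zero_le_one (hx i0 hi0))
    _ ≤ (t.card : ℝ) ^ s * ∑ i ∈ t, x i ^ s := by
        gcongr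
        exact Finset.single_le_sum (fun i hi => Real.rpow_nonneg (hx0 i hi) s) hi0



lemma tsum_pi_prod_fin {α : Type*} (g : α → ℝ≥0∞) :
    ∀ n : ℕ, ∑' f : Fin n → α, ∏ i, g (f i) = (∑' a, g a) ^ n := by
  intro n
  induction n with
  | zero =>
      rw [pow_zero]
      have : ∀ f : Fin 0 → α, (∏ i, g (f i)) = 1 := fun f => by simp
      rw [tsum_congr this]
      exact tsum_eq_single (fun i => i.elim0) (by intro f hf; exact absurd (funext fun i => i.elim0) hf) |>.trans rfl
  | succ n ih =>
      rw [← Equiv.tsum_eq (Fin.consEquiv (fun _ : Fin (n + 1) => α)) (fun f => ∏ i, g (f i))]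
      have : ∀ p : α × (Fin n → α),
          (∏ i, g (((Fin.consEquiv (fun _ : Fin (n + 1) => α)) p) i)) = g p.1 * ∏ i, g (p.2 i) := by
        intro p
        rw [Fin.prod_univ_succ]
        simp
      rw [tsum_congr this,
        ENNReal.tsum_prod (f := fun a (f' : Fin n → α) => g a * ∏ i, g (f' i))]
      simp_rw [ENNReal.tsum_mul_left]
      rw [ENNReal.tsum_mul_right, ih, pow_succ, mul_comm]

lemma tsum_pi_prod {ι α : Type*} [Fintype ι] (g : α → ℝ≥0∞) :
    ∑' f : ι → α, ∏ i, g (f i) = (∑' a, g a) ^ (Fintype.card ι) := by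
  classical
  let e := Fintype.equivFin ι
  rw [← Equiv.tsum_eq (Equiv.arrowCongr e.symm (Equiv.refl α)) (fun f => ∏ i, g (f i)),
    ← tsum_pi_prod_fin g (Fintype.card ι)]
  apply tsum_congr; intro f
  exact Fintype.prod_equiv e _ _ (fun i => by simp [Equiv.arrowCongr])

lemma ennreal_mul_self_le_sq_add_sq (a b : ℝ≥0∞) : a * b ≤ a ^ 2 + b ^ 2 := by
  rcases le_total a b with h | h
  · calc a * b ≤ b * b := mul_le_mul_left h b
      _ = b ^ 2 := (sq b).symm
      _ ≤ _ := le_add_self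
  · calc a * b ≤ a * a := mul_le_mul_right h a
      _ = a ^ 2 := (sq a).symm
      _ ≤ _ := le_add_right le_rfl

lemma sq_finset_sum_le {ι : Type*} (t : Finset ι) (x : ι → ℝ≥0∞) :
    (∑ i ∈ t, x i) ^ 2 ≤ (2 * t.card) * ∑ i ∈ t, (x i) ^ 2 := by
  rw [sq, Finset.sum_mul_sum]
  calc ∑ i ∈ t, ∑ j ∈ t, x i * x j ≤ ∑ i ∈ t, ∑ j ∈ t, (x i ^ 2 + x j ^ 2) := by
        gcongr with i hi j hj; exact ennreal_mul_self_le_sq_add_sq _ _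
    _ = (2 * t.card) * ∑ i ∈ t, (x i) ^ 2 := by
        have h1 : ∀ i ∈ t, ∑ j ∈ t, (x i ^ 2 + x j ^ 2)
            = (t.card : ℝ≥0∞) * x i ^ 2 + ∑ j ∈ t, x j ^ 2 := fun i _ => by
          rw [Finset.sum_add_distrib, Finset.sum_const, nsmul_eq_mul]
        rw [Finset.sum_congr rfl h1, Finset.sum_add_distrib, Finset.sum_const,
          ← Finset.mul_sum, nsmul_eq_mul]
        ring

lemma tsum_sq_tsum_mul_le {β γ : Type*} (c : β → ℝ≥0∞) (v : β → γ → ℝ≥0∞) (H : ℝ≥0∞)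
    (hv : ∀ r, ∑' k, (v r k) ^ 2 ≤ H) :
    ∑' k, (∑' r, c r * v r k) ^ 2 ≤ 2 * (∑' r, c r) ^ 2 * H := by
  have expand : ∀ k, (∑' r, c r * v r k) ^ 2 = ∑' r, ∑' r', (c r * v r k) * (c r' * v r' k) := by
    intro k
    rw [sq, ← ENNReal.tsum_mul_right]
    apply tsum_congr; intro r
    rw [← ENNReal.tsum_mul_left]
  calc ∑' k, (∑' r, c r * v r k) ^ 2
      = ∑' r, ∑' r', ∑' k, (c r * v r k) * (c r' * v r' k) := by
        rw [tsum_congr expand, ENNReal.tsum_comm]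
        apply tsum_congr; intro r
        exact ENNReal.tsum_comm
    _ ≤ ∑' r, ∑' r', c r * c r' * (2 * H) := by
        gcongr with r r'
        calc ∑' k, (c r * v r k) * (c r' * v r' k)
            = ∑' k, (c r * c r') * (v r k * v r' k) := by apply tsum_congr; intro k; ring
          _ = (c r * c r') * ∑' k, (v r k * v r' k) := ENNReal.tsum_mul_left
          _ ≤ (c r * c r') * ∑' k, ((v r k) ^ 2 + (v r' k) ^ 2) := by
              gcongr with k; exact ennreal_mul_self_le_sq_add_sq _ _
          _ ≤ c r * c r' * (2 * H) := by
              rw [ENNReal.tsum_add]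
              apply mul_le_mul_right
              calc (∑' k, (v r k)^2) + ∑' k, (v r' k)^2 ≤ H + H := add_le_add (hv r) (hv r')
                _ = 2 * H := (two_mul H).symm
    _ = 2 * (∑' r, c r) ^ 2 * H := by
        have h1 : ∀ r, ∑' r', c r * c r' * (2 * H) = c r * ((∑' r', c r') * (2 * H)) := by
          intro r
          rw [show (fun r' => c r * c r' * (2 * H)) = fun r' => c r * (c r' * (2 * H)) by
            funext r'; ring]
          rw [ENNReal.tsum_mul_left, ENNReal.tsum_mul_right]
        rw [tsum_congr h1, ENNReal.tsum_mul_right]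
        ring

lemma ofReal_norm_tsum_le {α : Type*} (f : α → ℂ) :
    ENNReal.ofReal ‖∑' a, f a‖ ≤ ∑' a, ENNReal.ofReal ‖f a‖ := by
  by_cases h : Summable fun a => ‖f a‖
  · calc ENNReal.ofReal ‖∑' a, f a‖ ≤ ENNReal.ofReal (∑' a, ‖f a‖) :=
        ENNReal.ofReal_le_ofReal (norm_tsum_le_tsum_norm h)
      _ = _ := ENNReal.ofReal_tsum_of_nonneg (fun a => norm_nonneg _) h
  · have h2 : ¬ Summable f := fun hs => h (summable_norm_iff.mpr hs)
    rw [tsum_eq_zero_of_not_summable h2]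
    simp



variable {d : ℕ}

lemma neg_one_pow_mul_self (m : ℕ) : ((-1 : ℤ) ^ m) * ((-1 : ℤ) ^ m) = 1 := by
  rw [← pow_add]; exact Even.neg_one_pow ⟨m, rfl⟩

lemma zeroMom_solve {q : ℕ} {nvec : Fin q → Zd d} (h : ZeroMom nvec) (j : Fin q) :
    nvec j = ∑ i ∈ univ.erase j, ((-1 : ℤ) ^ ((i : ℕ) + (j : ℕ) + 1)) • nvec i := by
  have h0 : ((-1:ℤ)^(j:ℕ)) • nvec j + ∑ i ∈ univ.erase j, ((-1:ℤ)^(i:ℕ)) • nvec i = 0 := by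
    rw [Finset.add_sum_erase _ (fun i : Fin q => ((-1:ℤ)^(i:ℕ)) • nvec i) (Finset.mem_univ j)]
    exact h
  have h1 : ((-1:ℤ)^(j:ℕ)) • nvec j = ∑ i ∈ univ.erase j, ((-1:ℤ)^((i:ℕ)+1)) • nvec i := by
    rw [eq_neg_of_add_eq_zero_left h0, ← Finset.sum_neg_distrib]
    apply Finset.sum_congr rfl; intro i _
    rw [← neg_smul]; congr 1; ring
  calc nvec j = ((-1:ℤ)^(j:ℕ)) • (((-1:ℤ)^(j:ℕ)) • nvec j) := by
        rw [smul_smul, neg_one_pow_mul_self, one_smul]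
    _ = ∑ i ∈ univ.erase j, ((-1:ℤ)^((i:ℕ)+(j:ℕ)+1)) • nvec i := by
        rw [h1, Finset.smul_sum]
        apply Finset.sum_congr rfl; intro i _
        rw [smul_smul]; congr 1; ring

lemma prod_subtype_ne {M : Type*} [CommMonoid M] {N : ℕ} (j : Fin N) (F : Fin N → M) :
    ∏ m : {l : Fin N // l ≠ j}, F m.1 = ∏ l ∈ univ.erase j, F l :=
  (Finset.prod_subtype (univ.erase j) (fun x => by simp) F).symm

lemma sum_subtype_ne {M : Type*} [AddCommMonoid M] {N : ℕ} (j : Fin N) (F : Fin N → M) :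
    ∑ m : {l : Fin N // l ≠ j}, F m.1 = ∑ l ∈ univ.erase j, F l :=
  (Finset.sum_subtype (univ.erase j) (fun x => by simp) F).symm

lemma prod_J {M : Type*} [CommMonoid M] {N : ℕ} (i j : Fin N) (hij : i ≠ j) (F : Fin N → M) :
    ∏ m : {m : {l : Fin N // l ≠ j} // m ≠ ⟨i, hij⟩}, F m.1.1
      = ∏ l ∈ (univ.erase j).erase i, F l := by
  refine Finset.prod_bij
    (fun (m : {m : {l : Fin N // l ≠ j} // m ≠ ⟨i, hij⟩}) (_ : m ∈ univ) => m.1.1)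
    ?_ ?_ ?_ ?_
  · intro m _
    rw [Finset.mem_erase, Finset.mem_erase]
    refine ⟨fun hc => m.2 (by apply Subtype.ext; simpa using hc), m.1.2, Finset.mem_univ _⟩
  · intro m1 _ m2 _ h
    exact Subtype.ext (Subtype.ext h)
  · intro b hb
    rw [Finset.mem_erase, Finset.mem_erase] at hb
    exact ⟨⟨⟨b, hb.2.1⟩, fun hc => hb.1 (congrArg Subtype.val hc)⟩, Finset.mem_univ _, rfl⟩
  · intro m _; rfl


lemma sum_J {M : Type*} [AddCommMonoid M] {N : ℕ} (i j : Fin N) (hij : i ≠ j) (F : Fin N → M) :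
    ∑ m : {m : {l : Fin N // l ≠ j} // m ≠ ⟨i, hij⟩}, F m.1.1
      = ∑ l ∈ (univ.erase j).erase i, F l := by
  refine Finset.sum_bij
    (fun (m : {m : {l : Fin N // l ≠ j} // m ≠ ⟨i, hij⟩}) (_ : m ∈ univ) => m.1.1)
    ?_ ?_ ?_ ?_
  · intro m _
    rw [Finset.mem_erase, Finset.mem_erase]
    refine ⟨fun hc => m.2 (by apply Subtype.ext; simpa using hc), m.1.2, Finset.mem_univ _⟩
  · intro m1 _ m2 _ h
    exact Subtype.ext (Subtype.ext h)
  · intro b hb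
    rw [Finset.mem_erase, Finset.mem_erase] at hb
    exact ⟨⟨⟨b, hb.2.1⟩, fun hc => hb.1 (congrArg Subtype.val hc)⟩, Finset.mem_univ _, rfl⟩
  · intro m _; rfl

lemma card_ne {N : ℕ} (j : Fin N) : Fintype.card {l : Fin N // l ≠ j} = N - 1 := by
  simp [Fintype.card_subtype_compl]

lemma card_J {N : ℕ} (i j : Fin N) (hij : i ≠ j) :
    Fintype.card {m : {l : Fin N // l ≠ j} // m ≠ ⟨i, hij⟩} = N - 2 := by
  rw [show Fintype.card {m : {l : Fin N // l ≠ j} // m ≠ ⟨i, hij⟩}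
      = Fintype.card {l : Fin N // l ≠ j} - 1 by simp [Fintype.card_subtype_compl],
    card_ne]
  omega

def signAffine {d : ℕ} (ε : ℤ) (hε : ε * ε = 1) (c : Zd d) : Zd d ≃ Zd d where
  toFun k := ε • k + c
  invFun n := ε • (n - c)
  left_inv k := by simp only []; rw [add_sub_cancel_right, smul_smul, hε, one_smul]
  right_inv n := by simp only []; rw [smul_smul, hε, one_smul, sub_add_cancel]

lemma tsum_affine {d : ℕ} (ε : ℤ) (hε : ε * ε = 1) (c : Zd d) (F : Zd d → ℝ≥0∞) :
    ∑' k : Zd d, F (ε • k + c) = ∑' n : Zd d, F n :=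
  Equiv.tsum_eq (signAffine ε hε c) F

lemma erase_nonempty {N : ℕ} (hN : 2 ≤ N) (j : Fin N) : (univ.erase j).Nonempty := by
  rw [← Finset.card_pos, Finset.card_erase_of_mem (mem_univ j), Finset.card_univ,
    Fintype.card_fin]
  omega

lemma bracket_bound {d N : ℕ} (hN : 2 ≤ N) {s : ℝ} (hs : 0 ≤ s) {nvec : Fin N → Zd d}
    (hzm : ZeroMom nvec) (j : Fin N) :
    jap (nvec j) ^ s ≤ ((N - 1 : ℕ) : ℝ) ^ s * ∑ i ∈ univ.erase j, jap (nvec i) ^ s := by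
  have hne := erase_nonempty hN j
  have h1 : jap (nvec j) ≤ ∑ i ∈ univ.erase j, jap (nvec i) := by
    calc jap (nvec j)
        = jap (∑ i ∈ univ.erase j, ((-1 : ℤ) ^ ((i : ℕ) + (j : ℕ) + 1)) • nvec i) := by
          rw [← zeroMom_solve hzm j]
      _ ≤ ∑ i ∈ univ.erase j, jap (((-1 : ℤ) ^ ((i : ℕ) + (j : ℕ) + 1)) • nvec i) :=
          jap_sum_le hne _
      _ = ∑ i ∈ univ.erase j, jap (nvec i) :=
          Finset.sum_congr rfl fun i _ => jap_neg_one_pow_smul _ _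
  calc jap (nvec j) ^ s ≤ (∑ i ∈ univ.erase j, jap (nvec i)) ^ s :=
        Real.rpow_le_rpow (jap_nonneg _) h1 hs
    _ ≤ ((univ.erase j).card : ℝ) ^ s * ∑ i ∈ univ.erase j, jap (nvec i) ^ s :=
        sum_rpow_le hne _ (fun i _ => one_le_jap _) hs
    _ = ((N - 1 : ℕ) : ℝ) ^ s * ∑ i ∈ univ.erase j, jap (nvec i) ^ s := by
        rw [Finset.card_erase_of_mem (mem_univ j), Finset.card_univ, Fintype.card_fin]

noncomputable def iota1 {d N : ℕ} (j : Fin N) (f : {l : Fin N // l ≠ j} → Zd d) : Fin N → Zd d :=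
  fun l => if h : l = j
    then ∑ m : {l : Fin N // l ≠ j}, ((-1 : ℤ) ^ ((m.1 : ℕ) + (j : ℕ) + 1)) • f m
    else f ⟨l, h⟩

lemma iota1_injective {d N : ℕ} (j : Fin N) : Function.Injective (iota1 (d := d) j) := by
  intro f g h
  funext m
  have := congrFun h m.1
  rwa [iota1, iota1, dif_neg m.2, dif_neg m.2] at this

lemma iota1_spec {d N : ℕ} (j : Fin N) {nvec : Fin N → Zd d} (hzm : ZeroMom nvec) :
    nvec = iota1 j (fun m => nvec m.1) := by
  funext l
  by_cases hl : l = j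
  · rw [iota1, dif_pos hl,
      sum_subtype_ne j (fun i : Fin N => ((-1 : ℤ) ^ ((i : ℕ) + (j : ℕ) + 1)) • nvec i), hl]
    exact zeroMom_solve hzm j
  · rw [iota1, dif_neg hl]

lemma ggL1 {d N : ℕ} (j : Fin N) (A : Zd d → ℝ≥0∞) :
    ∑' k : Zd d, ∑' nvec : Fin N → Zd d,
      (if nvec j = k ∧ ZeroMom nvec then ∏ l ∈ univ.erase j, A (nvec l) else 0)
    ≤ (∑' n : Zd d, A n) ^ (N - 1) := by
  rw [ENNReal.tsum_comm]
  have h1 : ∀ nvec : Fin N → Zd d,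
      (∑' k : Zd d, if nvec j = k ∧ ZeroMom nvec then (∏ l ∈ univ.erase j, A (nvec l)) else 0)
      = (if ZeroMom nvec then ∏ l ∈ univ.erase j, A (nvec l) else 0) := by
    intro nvec
    rw [tsum_eq_single (nvec j) (fun k hk => if_neg (fun hc => hk (hc.1.symm)))]
    simp
  rw [tsum_congr h1]
  set F : (Fin N → Zd d) → ℝ≥0∞ :=
    fun nvec => if ZeroMom nvec then ∏ l ∈ univ.erase j, A (nvec l) else 0 with hF
  have h2 : ∑' nvec : Fin N → Zd d, F nvec = ∑' f : {l : Fin N // l ≠ j} → Zd d, F (iota1 j f) := by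
    refine tsum_eq_tsum_of_ne_zero_bij (f := F) (g := fun f => F (iota1 j f))
      (fun x => iota1 j x.1) ?_ ?_ ?_
    · intro x y hxy
      exact Subtype.ext (iota1_injective j hxy)
    · intro nvec hnvec
      have hzm : ZeroMom nvec := by
        by_contra hc
        exact hnvec (by rw [hF]; simp [hc])
      refine ⟨⟨fun m => nvec m.1, ?_⟩, (iota1_spec j hzm).symm⟩
      rw [Function.mem_support, ← iota1_spec j hzm]
      exact hnvec
    · intro x; rfl
  rw [h2]
  have h3 : ∀ f : {l : Fin N // l ≠ j} → Zd d,
      F (iota1 j f) ≤ ∏ m : {l : Fin N // l ≠ j}, A (f m) := by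
    intro f
    rw [hF]
    simp only []
    split
    · rw [← prod_subtype_ne j (fun l => A (iota1 j f l))]
      apply le_of_eq
      apply Finset.prod_congr rfl
      intro m _
      rw [iota1, dif_neg m.2, Subtype.coe_eta]
    · exact zero_le
  calc ∑' f : {l : Fin N // l ≠ j} → Zd d, F (iota1 j f)
      ≤ ∑' f : {l : Fin N // l ≠ j} → Zd d, ∏ m : {l : Fin N // l ≠ j}, A (f m) :=
        ENNReal.tsum_le_tsum h3
    _ = (∑' n : Zd d, A n) ^ (N - 1) := by rw [tsum_pi_prod, card_ne]

noncomputable def psi {d N : ℕ} (i j : Fin N) (hij : i ≠ j) (k : Zd d)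
    (r : {m : {l : Fin N // l ≠ j} // m ≠ ⟨i, hij⟩} → Zd d) : Zd d :=
  ((-1 : ℤ) ^ ((j : ℕ) + (i : ℕ) + 1)) • k
    + ∑ m : {m : {l : Fin N // l ≠ j} // m ≠ ⟨i, hij⟩},
        ((-1 : ℤ) ^ ((m.1.1 : ℕ) + (i : ℕ) + 1)) • r m

noncomputable def iota2 {d N : ℕ} (i j : Fin N) (hij : i ≠ j) (k : Zd d)
    (r : {m : {l : Fin N // l ≠ j} // m ≠ ⟨i, hij⟩} → Zd d) : Fin N → Zd d :=
  fun l => if hj : l = j then k else if hi : l = i then psi i j hij k r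
    else r ⟨⟨l, hj⟩, fun hc => hi (congrArg Subtype.val hc)⟩

lemma iota2_apply_i {d N : ℕ} (i j : Fin N) (hij : i ≠ j) (k : Zd d)
    (r : {m : {l : Fin N // l ≠ j} // m ≠ ⟨i, hij⟩} → Zd d) :
    iota2 i j hij k r i = psi i j hij k r := by
  simp only [iota2]
  rw [dif_neg hij]
  simp

lemma iota2_apply_m {d N : ℕ} (i j : Fin N) (hij : i ≠ j) (k : Zd d)
    (r : {m : {l : Fin N // l ≠ j} // m ≠ ⟨i, hij⟩} → Zd d)
    (m : {m : {l : Fin N // l ≠ j} // m ≠ ⟨i, hij⟩}) :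
    iota2 i j hij k r m.1.1 = r m := by
  simp only [iota2]
  rw [dif_neg m.1.2, dif_neg (show ¬ (m.1.1 : Fin N) = i from
    fun hc => m.2 (by apply Subtype.ext; simpa using hc))]

lemma iota2_injective {d N : ℕ} (i j : Fin N) (hij : i ≠ j) (k : Zd d) :
    Function.Injective (iota2 (d := d) i j hij k) := by
  intro r r' h
  funext m
  have := congrFun h m.1.1
  rwa [iota2_apply_m, iota2_apply_m] at this

lemma iota2_spec {d N : ℕ} (i j : Fin N) (hij : i ≠ j) {nvec : Fin N → Zd d}
    (hzm : ZeroMom nvec) {k : Zd d} (hk : nvec j = k) :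
    nvec = iota2 i j hij k (fun m => nvec m.1.1) := by
  funext l
  by_cases hj : l = j
  · subst hj
    simp only [iota2]
    simpa using hk
  · by_cases hi : l = i
    · simp only [iota2]
      rw [dif_neg hj, dif_pos hi, hi]
      simp only [psi]
      rw [← hk]
      have hji : j ∈ univ.erase i := Finset.mem_erase.mpr ⟨fun hc => hij hc.symm, mem_univ j⟩
      rw [zeroMom_solve hzm i, ← Finset.add_sum_erase (univ.erase i)
        (fun l : Fin N => ((-1 : ℤ) ^ ((l : ℕ) + (i : ℕ) + 1)) • nvec l) hji]
      congr 1
      rw [Finset.erase_right_comm]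
      exact (sum_J i j hij (fun l : Fin N => ((-1 : ℤ) ^ ((l : ℕ) + (i : ℕ) + 1)) • nvec l)).symm
    · simp only [iota2]
      rw [dif_neg hj, dif_neg hi]

lemma ggL2 {d N : ℕ} (i j : Fin N) (hij : i ≠ j) (A V : Zd d → ℝ≥0∞) :
    ∑' k : Zd d, (∑' nvec : Fin N → Zd d,
        if nvec j = k ∧ ZeroMom nvec then
          V (nvec i) * ∏ l ∈ (univ.erase j).erase i, A (nvec l) else 0) ^ 2
    ≤ 2 * ((∑' n : Zd d, A n) ^ (N - 2)) ^ 2 * ∑' n : Zd d, (V n) ^ 2 := by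
  have step1 : ∀ k : Zd d, (∑' nvec : Fin N → Zd d,
      if nvec j = k ∧ ZeroMom nvec then
        V (nvec i) * ∏ l ∈ (univ.erase j).erase i, A (nvec l) else 0)
      ≤ ∑' r : {m : {l : Fin N // l ≠ j} // m ≠ ⟨i, hij⟩} → Zd d,
        (∏ m : {m : {l : Fin N // l ≠ j} // m ≠ ⟨i, hij⟩}, A (r m)) * V (psi i j hij k r) := by
    intro k
    set F : (Fin N → Zd d) → ℝ≥0∞ := fun nvec =>
      if nvec j = k ∧ ZeroMom nvec then
        V (nvec i) * ∏ l ∈ (univ.erase j).erase i, A (nvec l) else 0 with hF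
    have h2 : ∑' nvec : Fin N → Zd d, F nvec
        = ∑' r : {m : {l : Fin N // l ≠ j} // m ≠ ⟨i, hij⟩} → Zd d, F (iota2 i j hij k r) := by
      refine tsum_eq_tsum_of_ne_zero_bij (f := F) (g := fun r => F (iota2 i j hij k r))
        (fun x => iota2 i j hij k x.1) ?_ ?_ ?_
      · intro x y hxy
        exact Subtype.ext (iota2_injective i j hij k hxy)
      · intro nvec hnvec
        have hcond : nvec j = k ∧ ZeroMom nvec := by
          by_contra hc
          exact hnvec (by rw [hF]; simp [hc])
        refine ⟨⟨fun m => nvec m.1.1, ?_⟩, (iota2_spec i j hij hcond.2 hcond.1).symm⟩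
        rw [Function.mem_support, ← iota2_spec i j hij hcond.2 hcond.1]
        exact hnvec
      · intro x; rfl
    rw [h2]
    apply ENNReal.tsum_le_tsum
    intro r
    rw [hF]
    simp only []
    split
    · rw [iota2_apply_i, mul_comm]
      apply mul_le_mul_left
      apply le_of_eq
      rw [← prod_J i j hij (fun l => A (iota2 i j hij k r l))]
      apply Finset.prod_congr rfl
      intro m _
      rw [iota2_apply_m]
    · exact zero_le
  calc ∑' k : Zd d, (∑' nvec : Fin N → Zd d,
        if nvec j = k ∧ ZeroMom nvec then
          V (nvec i) * ∏ l ∈ (univ.erase j).erase i, A (nvec l) else 0) ^ 2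
      ≤ ∑' k : Zd d, (∑' r : {m : {l : Fin N // l ≠ j} // m ≠ ⟨i, hij⟩} → Zd d,
          (∏ m : {m : {l : Fin N // l ≠ j} // m ≠ ⟨i, hij⟩}, A (r m)) * V (psi i j hij k r)) ^ 2 :=
        ENNReal.tsum_le_tsum (fun k => pow_le_pow_left' (step1 k) 2)
    _ ≤ 2 * (∑' r : {m : {l : Fin N // l ≠ j} // m ≠ ⟨i, hij⟩} → Zd d,
          ∏ m : {m : {l : Fin N // l ≠ j} // m ≠ ⟨i, hij⟩}, A (r m)) ^ 2 * ∑' n : Zd d, (V n) ^ 2 := by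
        refine tsum_sq_tsum_mul_le _ _ _ ?_
        intro r
        apply le_of_eq
        simp only [psi]
        exact tsum_affine _ (neg_one_pow_mul_self _) _ (fun n => (V n) ^ 2)
    _ = 2 * ((∑' n : Zd d, A n) ^ (N - 2)) ^ 2 * ∑' n : Zd d, (V n) ^ 2 := by
        rw [tsum_pi_prod, card_J]


lemma point_eq {d : ℕ} {s : ℝ} (n : Zd d) (x : ℝ) (hx : 0 ≤ x) :
    (ENNReal.ofReal (jap n ^ s) * ENNReal.ofReal x) ^ 2
      = ENNReal.ofReal (jap n ^ (2 * s) * x ^ 2) := by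
  rw [← ENNReal.ofReal_mul (Real.rpow_nonneg (jap_nonneg n) s),
    ← ENNReal.ofReal_pow (mul_nonneg (Real.rpow_nonneg (jap_nonneg n) s) hx), mul_pow]
  congr 2
  rw [sq, ← Real.rpow_add (jap_pos n), two_mul]

lemma norm_mono {d q : ℕ} (u : Zd d → ℂ) (nvec : Fin q → Zd d) :
    ‖mono u nvec‖ = ∏ i, ‖u (nvec i)‖ := by
  rw [mono, norm_prod]
  apply Finset.prod_congr rfl
  intro i _
  split <;> simp

end Helpers

open scoped ENNReal NNReal Classical

/-- **Vector field estimate for homogeneous polynomials** (Corollary 2.10).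
For `Q ∈ ℋ_{2q}(ℤ^d)` and `u ∈ h^s ∩ ℓ¹`: the defining series of `Q` converges
absolutely, `∇Q(u) ∈ h^s ∩ ℓ¹`, and
`‖∇Q(u)‖_{h^s} ≤ K ‖Q‖_∞ ‖u‖_{h^s} ‖u‖_{ℓ¹}^{2q−2}` with `K = K(q,s)`. -/
theorem vector_field_estimate (d q : ℕ) (hd : 1 ≤ d) (hq : 2 ≤ q)
    (s : ℝ) (hs : 0 ≤ s) :
    ∃ K : ℝ, 0 < K ∧
      ∀ Q : HomPoly d q (Set.univ : Set (Zd d)), ∀ u : Zd d → ℂ,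
        MemHs s u → MemL1 u →
        Summable (fun nvec : Fin (2 * q) → Zd d => ‖Q.coef nvec * mono u nvec‖) ∧
        MemHs s (Q.grad u) ∧ MemL1 (Q.grad u) ∧
        hsNorm s (Q.grad u) ≤ K * Q.normInf * hsNorm s u * l1Norm u ^ (2 * q - 2) := by
  classical
  set N : ℕ := 2 * q with hNdef
  have hN2 : 2 ≤ N := by omega
  set Kr0 : ℝ := Real.sqrt ((32 * N ^ 2 * (N - 1) ^ 2 : ℕ) : ℝ) * ((N - 1 : ℕ) : ℝ) ^ s
    with hKr0
  have hKr0_nonneg : 0 ≤ Kr0 :=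
    mul_nonneg (Real.sqrt_nonneg _) (Real.rpow_nonneg (Nat.cast_nonneg _) s)
  refine ⟨max 1 Kr0, lt_of_lt_of_le zero_lt_one (le_max_left _ _), ?_⟩
  intro Q u huHs huL1
  set A : Zd d → ℝ≥0∞ := fun n => ENNReal.ofReal ‖u n‖ with hA
  set W : Zd d → ℝ≥0∞ := fun n => ENNReal.ofReal (jap n ^ s) with hW
  set L : ℝ≥0∞ := ∑' n : Zd d, A n with hL
  set H2 : ℝ≥0∞ := ∑' n : Zd d, (W n * A n) ^ 2 with hH2
  set cE : ℝ≥0∞ := ENNReal.ofReal Q.normInf with hcE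
  set Cs : ℝ≥0∞ := ENNReal.ofReal (((N - 1 : ℕ) : ℝ) ^ s) with hCs
  have hCsne : Cs ≠ ⊤ := ENNReal.ofReal_ne_top
  have hcEne : cE ≠ ⊤ := ENNReal.ofReal_ne_top
  have hInt_nonneg : ∀ n : Zd d, 0 ≤ jap n ^ (2 * s) * ‖u n‖ ^ 2 := fun n =>
    mul_nonneg (Real.rpow_nonneg (jap_nonneg n) _) (sq_nonneg _)
  have hLof : L = ENNReal.ofReal (l1Norm u) := by
    rw [hL, l1Norm, ENNReal.ofReal_tsum_of_nonneg (fun n => norm_nonneg _) huL1]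
  have hLne : L ≠ ⊤ := by rw [hLof]; exact ENNReal.ofReal_ne_top
  have hl1_nonneg : 0 ≤ l1Norm u := tsum_nonneg fun n => norm_nonneg _
  have hLto : L.toReal = l1Norm u := by rw [hLof, ENNReal.toReal_ofReal hl1_nonneg]
  have hWA : ∀ n : Zd d, (W n * A n) ^ 2 = ENNReal.ofReal (jap n ^ (2 * s) * ‖u n‖ ^ 2) :=
    fun n => point_eq n ‖u n‖ (norm_nonneg _)
  have hH2of : H2 = ENNReal.ofReal (hsNormSq s u) := by
    rw [hH2, tsum_congr hWA, hsNormSq,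
      ENNReal.ofReal_tsum_of_nonneg hInt_nonneg huHs]
  have hH2ne : H2 ≠ ⊤ := by rw [hH2of]; exact ENNReal.ofReal_ne_top
  have hhsSq_nonneg : 0 ≤ hsNormSq s u := tsum_nonneg hInt_nonneg
  have hH2to : H2.toReal = hsNormSq s u := by
    rw [hH2of, ENNReal.toReal_ofReal hhsSq_nonneg]
  have hcoef : ∀ nvec, ‖Q.coef nvec‖ ≤ Q.normInf := fun nvec => le_ciSup Q.bdd nvec
  have hnormInf_nonneg : 0 ≤ Q.normInf :=
    le_trans (norm_nonneg (Q.coef (fun _ => 0))) (hcoef _)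
  -- Part 1 : absolute convergence of the defining series
  have hAprod : ∀ nvec : Fin N → Zd d,
      ENNReal.ofReal (∏ i, ‖u (nvec i)‖) = ∏ i, A (nvec i) := fun nvec =>
    ENNReal.ofReal_prod_of_nonneg (fun i _ => norm_nonneg _)
  have hprod_fin : ∑' nvec : Fin N → Zd d, ∏ i, A (nvec i) = L ^ N := by
    rw [tsum_pi_prod A, Fintype.card_fin, ← hL]
  have hprod_summable : Summable (fun nvec : Fin N → Zd d => ∏ i, ‖u (nvec i)‖) := by
    have h1 : (∑' nvec : Fin N → Zd d, ENNReal.ofReal (∏ i, ‖u (nvec i)‖)) ≠ ⊤ := by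
      rw [tsum_congr hAprod, hprod_fin]
      exact ENNReal.pow_ne_top hLne
    exact (ENNReal.summable_toReal h1).congr fun nvec =>
      ENNReal.toReal_ofReal (Finset.prod_nonneg fun i _ => norm_nonneg _)
  have hsum1 : Summable (fun nvec : Fin N → Zd d => ‖Q.coef nvec * mono u nvec‖) := by
    refine Summable.of_nonneg_of_le (fun _ => norm_nonneg _) ?_
      (hprod_summable.mul_left Q.normInf)
    intro nvec
    rw [norm_mul, norm_mono]
    exact mul_le_mul_of_nonneg_right (hcoef nvec)
      (Finset.prod_nonneg fun i _ => norm_nonneg _)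
  -- the auxiliary sums
  set gg : Fin N → Zd d → ℝ≥0∞ := fun j k => ∑' nvec : Fin N → Zd d,
    if nvec j = k ∧ ZeroMom nvec then ∏ l ∈ univ.erase j, A (nvec l) else 0 with hgg
  set gg' : Fin N → Fin N → Zd d → ℝ≥0∞ := fun i j k => ∑' nvec : Fin N → Zd d,
    if nvec j = k ∧ ZeroMom nvec then
      (W (nvec i) * A (nvec i)) * ∏ l ∈ (univ.erase j).erase i, A (nvec l) else 0 with hgg'
  -- pointwise bound for the gradient
  have hgrad_bound : ∀ k : Zd d,
      ENNReal.ofReal ‖Q.grad u k‖ ≤ 2 * cE * ∑ j : Fin N, gg j k := by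
    intro k
    have hterm : ∀ (nvec : Fin N → Zd d) (j : Fin N),
        ENNReal.ofReal ‖if (j : ℕ) % 2 = 1 ∧ nvec j = k then
            Q.coef nvec * ∏ l ∈ univ.erase j,
              (if (l : ℕ) % 2 = 0 then u (nvec l) else (starRingEnd ℂ) (u (nvec l)))
          else 0‖
        ≤ cE * if nvec j = k ∧ ZeroMom nvec then ∏ l ∈ univ.erase j, A (nvec l) else 0 := by
      intro nvec j
      by_cases h1 : (j : ℕ) % 2 = 1 ∧ nvec j = k
      · rw [if_pos h1]
        by_cases h0 : Q.coef nvec = 0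
        · simp [h0]
        · rw [if_pos ⟨h1.2, Q.zeroMom nvec h0⟩, norm_mul,
            ENNReal.ofReal_mul (norm_nonneg _)]
          refine mul_le_mul' (ENNReal.ofReal_le_ofReal (hcoef nvec)) (le_of_eq ?_)
          rw [norm_prod, ENNReal.ofReal_prod_of_nonneg (fun l _ => norm_nonneg _)]
          apply Finset.prod_congr rfl
          intro l _
          rw [hA]
          congr 1
          split <;> simp
      · rw [if_neg h1, norm_zero, ENNReal.ofReal_zero]
        exact zero_le
    have hsplit : ENNReal.ofReal ‖Q.grad u k‖
        = 2 * ENNReal.ofReal ‖∑' nvec : Fin N → Zd d, ∑ j : Fin N,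
            if (j : ℕ) % 2 = 1 ∧ nvec j = k then
              Q.coef nvec * ∏ l ∈ univ.erase j,
                (if (l : ℕ) % 2 = 0 then u (nvec l) else (starRingEnd ℂ) (u (nvec l)))
            else 0‖ := by
      rw [HomPoly.grad, norm_mul, ENNReal.ofReal_mul (norm_nonneg _)]
      norm_num
      rfl
    rw [hsplit]
    have hstep2 : ∀ nvec : Fin N → Zd d,
        ENNReal.ofReal ‖∑ j : Fin N,
            if (j : ℕ) % 2 = 1 ∧ nvec j = k then
              Q.coef nvec * ∏ l ∈ univ.erase j,
                (if (l : ℕ) % 2 = 0 then u (nvec l) else (starRingEnd ℂ) (u (nvec l)))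
            else 0‖
        ≤ ∑ j : Fin N, (cE *
            if nvec j = k ∧ ZeroMom nvec then ∏ l ∈ univ.erase j, A (nvec l) else 0) := by
      intro nvec
      refine le_trans (ENNReal.ofReal_le_ofReal (norm_sum_le _ _)) ?_
      rw [ENNReal.ofReal_sum_of_nonneg (fun j _ => norm_nonneg _)]
      exact Finset.sum_le_sum fun j _ => hterm nvec j
    calc 2 * ENNReal.ofReal ‖∑' nvec : Fin N → Zd d, ∑ j : Fin N,
            if (j : ℕ) % 2 = 1 ∧ nvec j = k then
              Q.coef nvec * ∏ l ∈ univ.erase j,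
                (if (l : ℕ) % 2 = 0 then u (nvec l) else (starRingEnd ℂ) (u (nvec l)))
            else 0‖
        ≤ 2 * ∑' nvec : Fin N → Zd d, ENNReal.ofReal ‖∑ j : Fin N,
            if (j : ℕ) % 2 = 1 ∧ nvec j = k then
              Q.coef nvec * ∏ l ∈ univ.erase j,
                (if (l : ℕ) % 2 = 0 then u (nvec l) else (starRingEnd ℂ) (u (nvec l)))
            else 0‖ := mul_le_mul_right (ofReal_norm_tsum_le _) 2
      _ ≤ 2 * ∑' nvec : Fin N → Zd d, ∑ j : Fin N, (cE *
            if nvec j = k ∧ ZeroMom nvec then ∏ l ∈ univ.erase j, A (nvec l) else 0) :=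
          mul_le_mul_right (ENNReal.tsum_le_tsum hstep2) 2
      _ = 2 * cE * ∑ j : Fin N, gg j k := by
          rw [Summable.tsum_finsetSum (fun (j : Fin N) _ => ENNReal.summable)]
          have h3 : ∀ j : Fin N, (∑' nvec : Fin N → Zd d, (cE *
              if nvec j = k ∧ ZeroMom nvec then ∏ l ∈ univ.erase j, A (nvec l) else 0))
              = cE * gg j k := fun j => ENNReal.tsum_mul_left
          rw [Finset.sum_congr rfl (fun j _ => h3 j), ← Finset.mul_sum, mul_assoc]
  -- ℓ¹ bound for the gradient
  have hgradL1 : ∑' k : Zd d, ENNReal.ofReal ‖Q.grad u k‖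
      ≤ 2 * cE * (N * L ^ (N - 1)) := by
    calc ∑' k : Zd d, ENNReal.ofReal ‖Q.grad u k‖
        ≤ ∑' k : Zd d, 2 * cE * ∑ j : Fin N, gg j k := ENNReal.tsum_le_tsum hgrad_bound
      _ = 2 * cE * ∑ j : Fin N, ∑' k : Zd d, gg j k := by
          rw [ENNReal.tsum_mul_left, Summable.tsum_finsetSum (fun (j : Fin N) _ => ENNReal.summable)]
      _ ≤ 2 * cE * ∑ j : Fin N, L ^ (N - 1) := by
          refine mul_le_mul_right (Finset.sum_le_sum fun j _ => ?_) _
          rw [hgg, hL]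
          exact ggL1 j A
      _ = 2 * cE * (N * L ^ (N - 1)) := by
          rw [Finset.sum_const, Finset.card_univ, Fintype.card_fin, nsmul_eq_mul]
  have hgradL1ne : (∑' k : Zd d, ENNReal.ofReal ‖Q.grad u k‖) ≠ ⊤ :=
    ne_top_of_le_ne_top (by
      refine ENNReal.mul_ne_top (ENNReal.mul_ne_top (by norm_num) hcEne) ?_
      exact ENNReal.mul_ne_top (ENNReal.natCast_ne_top N) (ENNReal.pow_ne_top hLne)) hgradL1
  have hMemL1 : MemL1 (Q.grad u) := by
    rw [MemL1]
    exact (ENNReal.summable_toReal hgradL1ne).congr fun k =>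
      ENNReal.toReal_ofReal (norm_nonneg _)
  -- weighted pointwise bound
  have hWgg : ∀ (j : Fin N) (k : Zd d),
      W k * gg j k ≤ Cs * ∑ i ∈ univ.erase j, gg' i j k := by
    intro j k
    have hpt : ∀ nvec : Fin N → Zd d,
        W k * (if nvec j = k ∧ ZeroMom nvec then ∏ l ∈ univ.erase j, A (nvec l) else 0)
        ≤ Cs * ∑ i ∈ univ.erase j,
            (if nvec j = k ∧ ZeroMom nvec then
              (W (nvec i) * A (nvec i)) * ∏ l ∈ (univ.erase j).erase i, A (nvec l)
            else 0) := by
      intro nvec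
      by_cases hc : nvec j = k ∧ ZeroMom nvec
      · rw [if_pos hc]
        have hbr := bracket_bound hN2 hs hc.2 j
        rw [hc.1] at hbr
        have hWk : W k ≤ Cs * ∑ i ∈ univ.erase j, W (nvec i) := by
          rw [hW, hCs]
          calc ENNReal.ofReal (jap k ^ s)
              ≤ ENNReal.ofReal (((N - 1 : ℕ) : ℝ) ^ s
                  * ∑ i ∈ univ.erase j, jap (nvec i) ^ s) :=
                ENNReal.ofReal_le_ofReal hbr
            _ = _ := by
                rw [ENNReal.ofReal_mul (Real.rpow_nonneg (Nat.cast_nonneg _) s),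
                  ENNReal.ofReal_sum_of_nonneg
                    (fun i _ => Real.rpow_nonneg (jap_nonneg _) s)]
        calc W k * ∏ l ∈ univ.erase j, A (nvec l)
            ≤ (Cs * ∑ i ∈ univ.erase j, W (nvec i)) * ∏ l ∈ univ.erase j, A (nvec l) :=
              mul_le_mul_left hWk _
          _ = Cs * ∑ i ∈ univ.erase j, W (nvec i) * ∏ l ∈ univ.erase j, A (nvec l) := by
              rw [mul_assoc, Finset.sum_mul]
          _ = Cs * ∑ i ∈ univ.erase j,
              (if nvec j = k ∧ ZeroMom nvec then
                (W (nvec i) * A (nvec i)) * ∏ l ∈ (univ.erase j).erase i, A (nvec l)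
              else 0) := by
              congr 1
              apply Finset.sum_congr rfl
              intro i hi
              rw [if_pos hc, mul_assoc,
                Finset.mul_prod_erase (univ.erase j) (fun l => A (nvec l)) hi]
      · rw [if_neg hc, mul_zero]
        exact zero_le
    calc W k * gg j k
        = ∑' nvec : Fin N → Zd d, W k *
            (if nvec j = k ∧ ZeroMom nvec then ∏ l ∈ univ.erase j, A (nvec l) else 0) := by
          rw [hgg, ENNReal.tsum_mul_left]
      _ ≤ ∑' nvec : Fin N → Zd d, Cs * ∑ i ∈ univ.erase j,
            (if nvec j = k ∧ ZeroMom nvec then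
              (W (nvec i) * A (nvec i)) * ∏ l ∈ (univ.erase j).erase i, A (nvec l)
            else 0) :=
          ENNReal.tsum_le_tsum hpt
      _ = Cs * ∑ i ∈ univ.erase j, gg' i j k := by
          rw [ENNReal.tsum_mul_left]
          congr 1
          rw [Summable.tsum_finsetSum (fun i _ => ENNReal.summable)]
  -- the main weighted ℓ² estimate
  set T : ℝ≥0∞ := ∑' k : Zd d, (W k * ENNReal.ofReal ‖Q.grad u k‖) ^ 2 with hT
  have hggL2 : ∀ (j : Fin N), ∀ i ∈ univ.erase j,
      ∑' k : Zd d, (gg' i j k) ^ 2 ≤ 2 * (L ^ (N - 2)) ^ 2 * H2 := by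
    intro j i hi
    have hij : i ≠ j := (Finset.mem_erase.mp hi).1
    rw [hgg', hL, hH2]
    exact ggL2 i j hij A (fun n => W n * A n)
  have hTbound : T ≤ ((32 * N ^ 2 * (N - 1) ^ 2 : ℕ) : ℝ≥0∞) * Cs ^ 2 * cE ^ 2
      * (L ^ (N - 2)) ^ 2 * H2 := by
    have hpt : ∀ k : Zd d, (W k * ENNReal.ofReal ‖Q.grad u k‖) ^ 2
        ≤ (2 * cE * Cs) ^ 2 * (2 * (N : ℝ≥0∞)) * (2 * ((N - 1 : ℕ) : ℝ≥0∞)) *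
          ∑ j : Fin N, ∑ i ∈ univ.erase j, (gg' i j k) ^ 2 := by
      intro k
      have h1 : W k * ENNReal.ofReal ‖Q.grad u k‖
          ≤ 2 * cE * Cs * ∑ j : Fin N, ∑ i ∈ univ.erase j, gg' i j k := by
        calc W k * ENNReal.ofReal ‖Q.grad u k‖
            ≤ W k * (2 * cE * ∑ j : Fin N, gg j k) := mul_le_mul_right (hgrad_bound k) _
          _ = 2 * cE * ∑ j : Fin N, W k * gg j k := by
              rw [mul_left_comm, Finset.mul_sum]
          _ ≤ 2 * cE * ∑ j : Fin N, Cs * ∑ i ∈ univ.erase j, gg' i j k :=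
              mul_le_mul_right (Finset.sum_le_sum fun j _ => hWgg j k) _
          _ = 2 * cE * Cs * ∑ j : Fin N, ∑ i ∈ univ.erase j, gg' i j k := by
              rw [← Finset.mul_sum]
              ring
      calc (W k * ENNReal.ofReal ‖Q.grad u k‖) ^ 2
          ≤ (2 * cE * Cs * ∑ j : Fin N, ∑ i ∈ univ.erase j, gg' i j k) ^ 2 :=
            pow_le_pow_left' h1 2
        _ = (2 * cE * Cs) ^ 2 * (∑ j : Fin N, ∑ i ∈ univ.erase j, gg' i j k) ^ 2 := by
            rw [mul_pow]
        _ ≤ (2 * cE * Cs) ^ 2 * ((2 * ((univ : Finset (Fin N)).card : ℝ≥0∞)) *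
              ∑ j : Fin N, (∑ i ∈ univ.erase j, gg' i j k) ^ 2) :=
            mul_le_mul_right (sq_finset_sum_le _ _) _
        _ ≤ (2 * cE * Cs) ^ 2 * ((2 * ((univ : Finset (Fin N)).card : ℝ≥0∞)) *
              ∑ j : Fin N, ((2 * (((univ.erase j).card : ℕ) : ℝ≥0∞)) *
                ∑ i ∈ univ.erase j, (gg' i j k) ^ 2)) := by
            exact mul_le_mul_right (mul_le_mul_right
              (Finset.sum_le_sum fun j _ => sq_finset_sum_le _ _) _) _
        _ = (2 * cE * Cs) ^ 2 * (2 * (N : ℝ≥0∞)) * (2 * ((N - 1 : ℕ) : ℝ≥0∞)) *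
              ∑ j : Fin N, ∑ i ∈ univ.erase j, (gg' i j k) ^ 2 := by
            simp_rw [Finset.card_erase_of_mem (Finset.mem_univ _), Finset.card_univ,
              Fintype.card_fin]
            rw [← Finset.mul_sum]
            ring
    calc T ≤ ∑' k : Zd d, (2 * cE * Cs) ^ 2 * (2 * (N : ℝ≥0∞)) * (2 * ((N - 1 : ℕ) : ℝ≥0∞)) *
          ∑ j : Fin N, ∑ i ∈ univ.erase j, (gg' i j k) ^ 2 := by
          rw [hT]
          exact ENNReal.tsum_le_tsum hpt
      _ = (2 * cE * Cs) ^ 2 * (2 * (N : ℝ≥0∞)) * (2 * ((N - 1 : ℕ) : ℝ≥0∞)) *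
          ∑ j : Fin N, ∑ i ∈ univ.erase j, ∑' k : Zd d, (gg' i j k) ^ 2 := by
          rw [ENNReal.tsum_mul_left]
          congr 1
          rw [Summable.tsum_finsetSum (fun (j : Fin N) _ => ENNReal.summable)]
          apply Finset.sum_congr rfl
          intro j _
          rw [Summable.tsum_finsetSum (fun i _ => ENNReal.summable)]
      _ ≤ (2 * cE * Cs) ^ 2 * (2 * (N : ℝ≥0∞)) * (2 * ((N - 1 : ℕ) : ℝ≥0∞)) *
          ∑ j : Fin N, ∑ i ∈ univ.erase j, (2 * (L ^ (N - 2)) ^ 2 * H2) :=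
          mul_le_mul_right (Finset.sum_le_sum fun j _ =>
            Finset.sum_le_sum fun i hi => hggL2 j i hi) _
      _ = (2 * cE * Cs) ^ 2 * (2 * (N : ℝ≥0∞)) * (2 * ((N - 1 : ℕ) : ℝ≥0∞)) *
          ((N : ℝ≥0∞) * (((N - 1 : ℕ) : ℝ≥0∞) * (2 * (L ^ (N - 2)) ^ 2 * H2))) := by
          congr 1
          rw [Finset.sum_congr rfl (fun j (_ : j ∈ univ) => by
              rw [Finset.sum_const, Finset.card_erase_of_mem (Finset.mem_univ _),
                Finset.card_univ, Fintype.card_fin, nsmul_eq_mul]),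
            Finset.sum_const, Finset.card_univ, Fintype.card_fin, nsmul_eq_mul]
      _ = ((32 * N ^ 2 * (N - 1) ^ 2 : ℕ) : ℝ≥0∞) * Cs ^ 2 * cE ^ 2
          * (L ^ (N - 2)) ^ 2 * H2 := by
          push_cast
          ring
  have hTne : T ≠ ⊤ :=
    ne_top_of_le_ne_top (by
      refine ENNReal.mul_ne_top (ENNReal.mul_ne_top (ENNReal.mul_ne_top (ENNReal.mul_ne_top
        (ENNReal.natCast_ne_top _) (ENNReal.pow_ne_top hCsne)) (ENNReal.pow_ne_top hcEne))
        (ENNReal.pow_ne_top (ENNReal.pow_ne_top hLne))) hH2ne) hTbound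
  have hptT : ∀ k : Zd d, (W k * ENNReal.ofReal ‖Q.grad u k‖) ^ 2
      = ENNReal.ofReal (jap k ^ (2 * s) * ‖Q.grad u k‖ ^ 2) :=
    fun k => point_eq k _ (norm_nonneg _)
  have hgradInt_nonneg : ∀ k : Zd d, 0 ≤ jap k ^ (2 * s) * ‖Q.grad u k‖ ^ 2 := fun k =>
    mul_nonneg (Real.rpow_nonneg (jap_nonneg k) _) (sq_nonneg _)
  have hMemHs : MemHs s (Q.grad u) := by
    rw [MemHs]
    have h1 : (∑' k : Zd d, ENNReal.ofReal (jap k ^ (2 * s) * ‖Q.grad u k‖ ^ 2)) ≠ ⊤ := by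
      rw [← tsum_congr hptT, ← hT]
      exact hTne
    exact (ENNReal.summable_toReal h1).congr fun k =>
      ENNReal.toReal_ofReal (hgradInt_nonneg k)
  have hTto : T.toReal = hsNormSq s (Q.grad u) := by
    rw [hT, tsum_congr hptT, ENNReal.tsum_toReal_eq (fun k => ENNReal.ofReal_ne_top),
      hsNormSq]
    exact tsum_congr fun k => ENNReal.toReal_ofReal (hgradInt_nonneg k)
  -- conclusion
  have hfinal : hsNorm s (Q.grad u) ≤ max 1 Kr0 * Q.normInf * hsNorm s u
      * l1Norm u ^ (N - 2) := by
    have h1 : hsNormSq s (Q.grad u)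
        ≤ (((32 * N ^ 2 * (N - 1) ^ 2 : ℕ) : ℝ≥0∞) * Cs ^ 2 * cE ^ 2
          * (L ^ (N - 2)) ^ 2 * H2).toReal := by
      rw [← hTto]
      refine ENNReal.toReal_mono ?_ hTbound
      refine ENNReal.mul_ne_top (ENNReal.mul_ne_top (ENNReal.mul_ne_top (ENNReal.mul_ne_top
        (ENNReal.natCast_ne_top _) (ENNReal.pow_ne_top hCsne)) (ENNReal.pow_ne_top hcEne))
        (ENNReal.pow_ne_top (ENNReal.pow_ne_top hLne))) hH2ne
    have h2 : (((32 * N ^ 2 * (N - 1) ^ 2 : ℕ) : ℝ≥0∞) * Cs ^ 2 * cE ^ 2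
          * (L ^ (N - 2)) ^ 2 * H2).toReal
        = ((32 * N ^ 2 * (N - 1) ^ 2 : ℕ) : ℝ) * (((N - 1 : ℕ) : ℝ) ^ s) ^ 2
          * Q.normInf ^ 2 * (l1Norm u ^ (N - 2)) ^ 2 * hsNormSq s u := by
      rw [ENNReal.toReal_mul, ENNReal.toReal_mul, ENNReal.toReal_mul, ENNReal.toReal_mul,
        ENNReal.toReal_pow, ENNReal.toReal_pow, ENNReal.toReal_pow, ENNReal.toReal_pow,
        ENNReal.toReal_natCast, hH2to, hLto, hCs, hcE,
        ENNReal.toReal_ofReal (Real.rpow_nonneg (Nat.cast_nonneg _) s),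
        ENNReal.toReal_ofReal hnormInf_nonneg]
    have h3 : ((32 * N ^ 2 * (N - 1) ^ 2 : ℕ) : ℝ) * (((N - 1 : ℕ) : ℝ) ^ s) ^ 2
          * Q.normInf ^ 2 * (l1Norm u ^ (N - 2)) ^ 2 * hsNormSq s u
        = (Kr0 * Q.normInf * hsNorm s u * l1Norm u ^ (N - 2)) ^ 2 := by
      have hsq : Real.sqrt ((32 * N ^ 2 * (N - 1) ^ 2 : ℕ) : ℝ) ^ 2
          = ((32 * N ^ 2 * (N - 1) ^ 2 : ℕ) : ℝ) := Real.sq_sqrt (Nat.cast_nonneg _)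
      have hhs : hsNorm s u ^ 2 = hsNormSq s u := Real.sq_sqrt hhsSq_nonneg
      rw [hKr0, ← hhs]
      conv_lhs => rw [← hsq]
      ring
    have h4 : 0 ≤ Kr0 * Q.normInf * hsNorm s u * l1Norm u ^ (N - 2) := by
      have := Real.sqrt_nonneg (hsNormSq s u)
      positivity
    calc hsNorm s (Q.grad u) = Real.sqrt (hsNormSq s (Q.grad u)) := by rw [hsNorm]
      _ ≤ Real.sqrt ((Kr0 * Q.normInf * hsNorm s u * l1Norm u ^ (N - 2)) ^ 2) :=
          Real.sqrt_le_sqrt (by rw [← h3, ← h2]; exact h1)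
      _ = Kr0 * Q.normInf * hsNorm s u * l1Norm u ^ (N - 2) := Real.sqrt_sq h4
      _ ≤ max 1 Kr0 * Q.normInf * hsNorm s u * l1Norm u ^ (N - 2) := by
          have hle : Kr0 ≤ max 1 Kr0 := le_max_right _ _
          have h0 : 0 ≤ Q.normInf * hsNorm s u * l1Norm u ^ (N - 2) := by
            have := Real.sqrt_nonneg (hsNormSq s u)
            positivity
          calc Kr0 * Q.normInf * hsNorm s u * l1Norm u ^ (N - 2)
              = Kr0 * (Q.normInf * hsNorm s u * l1Norm u ^ (N - 2)) := by ring
            _ ≤ max 1 Kr0 * (Q.normInf * hsNorm s u * l1Norm u ^ (N - 2)) :=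
                mul_le_mul_of_nonneg_right hle h0
            _ = max 1 Kr0 * Q.normInf * hsNorm s u * l1Norm u ^ (N - 2) := by ring
  exact ⟨hsum1, hMemHs, hMemL1, hfinal⟩

end NLSPaper
end

section
/- Resonance identity and triviality of quasi-resonant quartets on admissible tori. (i) For any real symmetric d×d matrix G, g(a,b) := aᵀGb, and any n₁, n₂, n₃, n₄ ∈ ℤ^d with n₁ − n₂ + n₃ − n₄ = 0, one has g(n₁,n₁) − g(n₂,n₂) + g(n₃,n₃) − g(n₄,n₄) = 2g(n₁−n₂, n₁−n₄). (ii) If moreover the flat torus determined by G is admissible with constants C, τ∗, and ‖nᵢ‖₂ ≤ M for all i with M ≥ 1, and |g(n₁,n₁) − g(n₂,n₂) + g(n₃,n₃) − g(n₄,n₄)| < 2C(2M)^{−2τ∗}, then n₁ = n₂ or n₁ = n₄; consequently {n₁,n₃} = {n₂,n₄} as multisets. -/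
open scoped BigOperators
open Finset

namespace NLSPaper

lemma gform_sub_left {d : ℕ} (G : Matrix (Fin d) (Fin d) ℝ) (a b c : Zd d) :
    gform G (a - b) c = gform G a c - gform G b c := by
  simp only [gform, Pi.sub_apply, Int.cast_sub, sub_mul, Finset.sum_sub_distrib]

lemma gform_sub_right {d : ℕ} (G : Matrix (Fin d) (Fin d) ℝ) (a b c : Zd d) :
    gform G a (b - c) = gform G a b - gform G a c := by
  simp only [gform, Pi.sub_apply, Int.cast_sub, mul_sub, Finset.sum_sub_distrib]

lemma gform_add_left {d : ℕ} (G : Matrix (Fin d) (Fin d) ℝ) (a b c : Zd d) :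
    gform G (a + b) c = gform G a c + gform G b c := by
  simp only [gform, Pi.add_apply, Int.cast_add, add_mul, Finset.sum_add_distrib]

lemma gform_add_right {d : ℕ} (G : Matrix (Fin d) (Fin d) ℝ) (a b c : Zd d) :
    gform G a (b + c) = gform G a b + gform G a c := by
  simp only [gform, Pi.add_apply, Int.cast_add, mul_add, Finset.sum_add_distrib]

lemma gform_symm {d : ℕ} {G : Matrix (Fin d) (Fin d) ℝ} (hGs : G.IsSymm) (a b : Zd d) :
    gform G a b = gform G b a := by
  rw [gform, Finset.sum_comm]
  refine Finset.sum_congr rfl fun i _ => Finset.sum_congr rfl fun j _ => ?_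
  rw [hGs.apply i j]; ring

lemma enorm_nonneg' {d : ℕ} (n : Zd d) : 0 ≤ enorm n := Real.sqrt_nonneg _

lemma one_le_enorm {d : ℕ} {n : Zd d} (hn : n ≠ 0) : 1 ≤ enorm n := by
  obtain ⟨i, hi⟩ : ∃ i, n i ≠ 0 := by
    by_contra h; push_neg at h; exact hn (funext h)
  have h1 : (1 : ℝ) ≤ ((n i : ℝ)) ^ 2 := by
    have : (1 : ℤ) ≤ (n i) ^ 2 := by
      rcases lt_or_gt_of_ne hi with h | h <;> nlinarith
    exact_mod_cast this
  have h2 : (1 : ℝ) ≤ ∑ j, ((n j : ℝ)) ^ 2 := by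
    refine h1.trans (Finset.single_le_sum (f := fun j => ((n j : ℝ)) ^ 2)
      (fun j _ => sq_nonneg _) (Finset.mem_univ i))
  calc (1 : ℝ) = Real.sqrt 1 := by simp
    _ ≤ enorm n := Real.sqrt_le_sqrt h2

lemma enorm_sub_le {d : ℕ} (a b : Zd d) : enorm (a - b) ≤ enorm a + enorm b := by
  have key : ∀ n : Zd d, enorm n =
      ‖(WithLp.equiv 2 (Fin d → ℝ)).symm (fun i => (n i : ℝ))‖ := by
    intro n
    rw [EuclideanSpace.norm_eq, enorm]
    congr 1
    refine Finset.sum_congr rfl fun i _ => ?_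
    simp [WithLp.equiv_symm_apply, PiLp.toLp_apply, Real.norm_eq_abs, sq_abs]
  rw [key, key, key]
  have : ((WithLp.equiv 2 (Fin d → ℝ)).symm (fun i => ((a - b) i : ℝ)))
      = (WithLp.equiv 2 (Fin d → ℝ)).symm (fun i => (a i : ℝ))
        - (WithLp.equiv 2 (Fin d → ℝ)).symm (fun i => (b i : ℝ)) := by
    ext i; simp [Pi.sub_apply]
  rw [this]
  exact norm_sub_le _ _

/-- **Resonance identity and triviality of quasi-resonant quartets on admissible tori.**
(i) For symmetric `G` and `n₁ − n₂ + n₃ − n₄ = 0`: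
`λ_{n₁}² − λ_{n₂}² + λ_{n₃}² − λ_{n₄}² = 2 g(n₁−n₂, n₁−n₄)`.
(ii) On an admissible torus, if all `|nᵢ| ≤ M` and the resonance function is smaller
than `2C(2M)^{−2τ∗}`, then `n₁ = n₂` or `n₁ = n₄`, hence `{n₁,n₃} = {n₂,n₄}`. -/
theorem resonance_identity_and_trivial_quartets
    (d : ℕ) (hd : 1 ≤ d) (G : Matrix (Fin d) (Fin d) ℝ) (hGs : G.IsSymm) :
    (∀ n₁ n₂ n₃ n₄ : Zd d, n₁ - n₂ + n₃ - n₄ = 0 →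
      gform G n₁ n₁ - gform G n₂ n₂ + gform G n₃ n₃ - gform G n₄ n₄
        = 2 * gform G (n₁ - n₂) (n₁ - n₄)) ∧
    (∀ C τstar : ℝ, IsAdmissible G C τstar →
      ∀ M : ℝ, 1 ≤ M →
      ∀ n₁ n₂ n₃ n₄ : Zd d, n₁ - n₂ + n₃ - n₄ = 0 →
        enorm n₁ ≤ M → enorm n₂ ≤ M → enorm n₃ ≤ M → enorm n₄ ≤ M →
        |gform G n₁ n₁ - gform G n₂ n₂ + gform G n₃ n₃ - gform G n₄ n₄|
          < 2 * C * (2 * M) ^ (-(2 * τstar)) →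
        (n₁ = n₂ ∨ n₁ = n₄) ∧ ({n₁, n₃} : Multiset (Zd d)) = {n₂, n₄}) := by
  have identity : ∀ n₁ n₂ n₃ n₄ : Zd d, n₁ - n₂ + n₃ - n₄ = 0 →
      gform G n₁ n₁ - gform G n₂ n₂ + gform G n₃ n₃ - gform G n₄ n₄
        = 2 * gform G (n₁ - n₂) (n₁ - n₄) := by
    intro n₁ n₂ n₃ n₄ h
    have h4 : n₄ = n₁ - n₂ + n₃ := by linear_combination -h
    subst h4
    simp only [gform_sub_left, gform_sub_right, gform_add_left, gform_add_right]
    rw [gform_symm hGs n₂ n₁, gform_symm hGs n₃ n₁, gform_symm hGs n₃ n₂]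
    ring
  refine ⟨identity, ?_⟩
  intro C τ hadm M hM n₁ n₂ n₃ n₄ h h1 h2 h3 h4 hsmall
  obtain ⟨hC, hτ, hbd⟩ := hadm
  have hkey := identity n₁ n₂ n₃ n₄ h
  have hor : n₁ = n₂ ∨ n₁ = n₄ := by
    by_contra hcon
    push_neg at hcon
    obtain ⟨ha, hb⟩ := hcon
    have ha' : n₁ - n₂ ≠ 0 := sub_ne_zero.mpr ha
    have hb' : n₁ - n₄ ≠ 0 := sub_ne_zero.mpr hb
    have hle := hbd _ _ ha' hb'
    have hM2 : (0:ℝ) < 2 * M := by linarith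
    have hea : enorm (n₁ - n₂) ≤ 2 * M := by
      have := enorm_sub_le n₁ n₂; linarith
    have heb : enorm (n₁ - n₄) ≤ 2 * M := by
      have := enorm_sub_le n₁ n₄; linarith
    have hea1 := one_le_enorm ha'
    have heb1 := one_le_enorm hb'
    have hpa : (0:ℝ) < enorm (n₁ - n₂) ^ τ :=
      Real.rpow_pos_of_pos (by linarith) _
    have hpb : (0:ℝ) < enorm (n₁ - n₄) ^ τ :=
      Real.rpow_pos_of_pos (by linarith) _
    have hpa' : enorm (n₁ - n₂) ^ τ ≤ (2 * M) ^ τ :=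
      Real.rpow_le_rpow (by linarith) hea hτ.le
    have hpb' : enorm (n₁ - n₄) ^ τ ≤ (2 * M) ^ τ :=
      Real.rpow_le_rpow (by linarith) heb hτ.le
    have hMp : (0:ℝ) < (2 * M) ^ τ := Real.rpow_pos_of_pos hM2 _
    have hfrac : C / ((2 * M) ^ τ * (2 * M) ^ τ)
        ≤ C / (enorm (n₁ - n₂) ^ τ * enorm (n₁ - n₄) ^ τ) := by
      apply div_le_div_of_nonneg_left hC.le (by positivity)
      exact mul_le_mul hpa' hpb' hpb.le hMp.le
    have hrw : (2 * M) ^ (-(2 * τ)) = ((2 * M) ^ τ * (2 * M) ^ τ)⁻¹ := by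
      rw [← Real.rpow_add hM2, Real.rpow_neg hM2.le]
      norm_num [two_mul]
    have habs : |gform G n₁ n₁ - gform G n₂ n₂ + gform G n₃ n₃ - gform G n₄ n₄|
        = 2 * |gform G (n₁ - n₂) (n₁ - n₄)| := by
      rw [hkey, abs_mul]; norm_num
    rw [habs, hrw] at hsmall
    have : C / ((2 * M) ^ τ * (2 * M) ^ τ) ≤ |gform G (n₁ - n₂) (n₁ - n₄)| :=
      hfrac.trans hle
    rw [div_eq_mul_inv] at this
    nlinarith [abs_nonneg (gform G (n₁ - n₂) (n₁ - n₄))]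
  refine ⟨hor, ?_⟩
  rcases hor with he | he
  · have h34 : n₃ = n₄ := by linear_combination h - he
    subst he; subst h34; rfl
  · have h32 : n₃ = n₂ := by linear_combination h - he
    subst he; subst h32
    exact Multiset.pair_comm n₁ n₃

end NLSPaper
end

section
/- Weighted multilinear estimate for recentred monomials. Under the standing parameter conventions, for all α ∈ {0,…,β}, all ξ ∈ 𝒰_s(ε), all multi-indices 𝐧 ∈ 𝔑̃, and all u ∈ 𝒱_{α,s}(20ε, ξ): w⁰_𝐧(α) · |z_𝐧(u, I(u) − ξ)| ≤ N_α^{−6s} η⁶. -/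
open scoped BigOperators
open Finset

namespace NLSPaper

/-- A multi-index `𝐧 = (𝐤, 𝐥, 𝐦)` with the non-pairing condition `k_n ℓ_n = 0`. -/
structure MultiIdx (d : ℕ) where
  kk : Zd d →₀ ℕ
  ll : Zd d →₀ ℕ
  mm : Zd d →₀ ℕ
  nonpair : ∀ n, kk n * ll n = 0

namespace MultiIdx

/-- Swap `𝐤` and `𝐥`. -/
def swap {d : ℕ} (I : MultiIdx d) : MultiIdx d :=
  ⟨I.ll, I.kk, I.mm, fun n => by rw [Nat.mul_comm]; exact I.nonpair n⟩

/-- Decrease `𝐤` by one at `k`. -/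
noncomputable def subK {d : ℕ} (I : MultiIdx d) (k : Zd d) : MultiIdx d where
  kk := I.kk - Finsupp.single k 1
  ll := I.ll
  mm := I.mm
  nonpair := fun n => by
    rcases Nat.mul_eq_zero.mp (I.nonpair n) with h | h
    · refine Nat.mul_eq_zero.mpr (Or.inl ?_)
      rw [Finsupp.tsub_apply]
      omega
    · exact Nat.mul_eq_zero.mpr (Or.inr h)

/-- Decrease `𝐥` by one at `k`. -/
noncomputable def subL {d : ℕ} (I : MultiIdx d) (k : Zd d) : MultiIdx d where
  kk := I.kk
  ll := I.ll - Finsupp.single k 1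
  mm := I.mm
  nonpair := fun n => by
    rcases Nat.mul_eq_zero.mp (I.nonpair n) with h | h
    · exact Nat.mul_eq_zero.mpr (Or.inl h)
    · refine Nat.mul_eq_zero.mpr (Or.inr ?_)
      rw [Finsupp.tsub_apply]
      omega

/-- Decrease `𝐦` by one at `k`. -/
noncomputable def subM {d : ℕ} (I : MultiIdx d) (k : Zd d) : MultiIdx d where
  kk := I.kk
  ll := I.ll
  mm := I.mm - Finsupp.single k 1
  nonpair := I.nonpair

/-- Total degree `Σ (2m_n + k_n + ℓ_n)`. -/
def deg {d : ℕ} (I : MultiIdx d) : ℕ :=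
  (I.kk.sum fun _ e => e) + (I.ll.sum fun _ e => e) + 2 * (I.mm.sum fun _ e => e)

/-- Zero momentum conditions (membership in `𝔑`). -/
def IsMom {d : ℕ} (I : MultiIdx d) : Prop :=
  ((I.kk.sum fun _ e => (e : ℤ)) = I.ll.sum fun _ e => (e : ℤ)) ∧
  ((I.kk.sum fun n e => (e : ℤ) • n) = I.ll.sum fun n e => (e : ℤ) • n)

/-- Support in `{|n| ≤ M}` (membership in the multi-indices over `ℤ^d_M`). -/
def SuppIn {d : ℕ} (M : ℝ) (I : MultiIdx d) : Prop :=
  ∀ n : Zd d, ¬ enorm n ≤ M → I.kk n = 0 ∧ I.ll n = 0 ∧ I.mm n = 0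

/-- `𝐧₋`, the size of the smallest unpaired frequency. -/
noncomputable def nminus {d : ℕ} (I : MultiIdx d) : ℝ :=
  sInf (enorm '' {n | 1 ≤ I.kk n + I.ll n})

/-- Integrable multi-indices (`𝐤 = 𝐥 = 0`, i.e. membership in `𝔍`). -/
def Integrable {d : ℕ} (I : MultiIdx d) : Prop := I.kk = 0 ∧ I.ll = 0

end MultiIdx

/-- The re-centered monomial `z_𝐧(u, y) = ∏ u_n^{k_n} ū_n^{ℓ_n} y_n^{m_n}`. -/
noncomputable def zMono {d : ℕ} (I : MultiIdx d) (u : Zd d → ℂ) (y : Zd d → ℝ) : ℂ :=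
  (I.kk.prod fun n e => u n ^ e) * (I.ll.prod fun n e => (starRingEnd ℂ) (u n) ^ e) *
    (I.mm.prod fun n e => ((y n : ℂ)) ^ e)

/-- The weight `D(α) = η^{−2−1/5} N_α^{2s}`. -/
noncomputable def Dw (s η Nα : ℝ) : ℝ := η ^ (-(2 + 1/5) : ℝ) * Nα ^ (2 * s)

/-- The weight `C_n(α) = η^{−1} min(|n|, N_α)^s N_α^τ`. -/
noncomputable def Cw {d : ℕ} (s τ η Nα : ℝ) (n : Zd d) : ℝ :=
  η⁻¹ * (min (enorm n) Nα) ^ s * Nα ^ τ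

/-- The weight `w⁰_𝐧(α)`. -/
noncomputable def weight0 {d : ℕ} (s τ η Nα : ℝ) (I : MultiIdx d) : ℝ :=
  Nα ^ (-(6 * s)) * η ^ (6 : ℕ) *
    ((I.mm.prod fun _ e => Dw s η Nα ^ e) *
      (I.kk.prod fun n e => Cw s τ η Nα n ^ e) *
      (I.ll.prod fun n e => Cw s τ η Nα n ^ e))

/-- The weight `w¹_𝐧(α)`. -/
noncomputable def weight1 {d : ℕ} (s τ η Nα : ℝ) (I : MultiIdx d) : ℝ :=
  Nα ^ (-(4 * s)) * η ^ (4 : ℕ) *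
    ((I.mm.prod fun _ e => Dw s η Nα ^ e) *
      (I.kk.prod fun n e => Cw s τ η Nα n ^ e) *
      (I.ll.prod fun n e => Cw s τ η Nα n ^ e))

/-- The parameter `η = ε^{1 − 1/100}`. -/
noncomputable def Eta (ε : ℝ) : ℝ := ε ^ ((1 : ℝ) - 1/100)

/-- The frequency scale `N_α = ε^{−α/(200 s)}`. -/
noncomputable def NNs (ε s : ℝ) (α : ℕ) : ℝ := ε ^ (-((α : ℝ) / (200 * s)))

/-- The parameter `τ = s/(10³ r)`. -/
noncomputable def tauP (s : ℝ) (r : ℕ) : ℝ := s / (1000 * r)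

/-- The set of internal parameters `𝒰_s(ε)` (supported on `ℤ^d_M`). -/
def UU (d : ℕ) (s ε M : ℝ) : Set (Zd d → ℝ) :=
  {ξ | (∀ n, ¬ enorm n ≤ M → ξ n = 0) ∧
    Summable (fun n : Zd d => jap n ^ (2 * s) * |ξ n|) ∧
    ∑' n : Zd d, jap n ^ (2 * s) * |ξ n| < 400 * ε ^ 2}

/-- The annulus `𝒱_{α,s}(ε', ξ)` (at frequency scale `Nα`). -/
def VV (d : ℕ) (s ε' Nα M : ℝ) (ξ : Zd d → ℝ) : Set (Zd d → ℂ) :=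
  {u | (∀ n, ¬ enorm n ≤ M → u n = 0) ∧ hsNorm s u < ε' ∧
    Summable (fun n : Zd d => jap n ^ (2 * s) * |‖u n‖ ^ 2 - ξ n|) ∧
    ∑' n : Zd d, jap n ^ (2 * s) * |‖u n‖ ^ 2 - ξ n| ≤
      ε' ^ ((2 : ℝ) + 1/5) * Nα ^ (-(2 * s))}

private lemma prod_merge {d : ℕ} (f : Zd d →₀ ℕ) (a b : Zd d → ℝ) :
    (f.prod fun n e => a n ^ e) * (f.prod fun n e => b n ^ e)
      = f.prod fun n e => (a n * b n) ^ e := by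
  simp only [Finsupp.prod, ← Finset.prod_mul_distrib, mul_pow]

private lemma prod_le_one' {d : ℕ} (f : Zd d →₀ ℕ) (c : Zd d → ℝ)
    (h0 : ∀ n, 0 ≤ c n) (h1 : ∀ n, c n ≤ 1) :
    f.prod (fun n e => c n ^ e) ≤ 1 :=
  Finset.prod_le_one (fun i _ => pow_nonneg (h0 i) _)
    (fun i _ => pow_le_one₀ (h0 i) (h1 i))

private lemma prod_nonneg' {d : ℕ} (f : Zd d →₀ ℕ) (c : Zd d → ℝ)
    (h0 : ∀ n, 0 ≤ c n) : 0 ≤ f.prod (fun n e => c n ^ e) :=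
  Finset.prod_nonneg (fun i _ => pow_nonneg (h0 i) _)


set_option maxHeartbeats 2000000 in
/-- **Weighted multilinear estimate for re-centered monomials** (Lemma 4.4):
for `α ∈ {0,…,β}`, `ξ ∈ 𝒰_s(ε)`, `𝐧 ∈ 𝔑̃` and `u ∈ 𝒱_{α,s}(20ε, ξ)`:
`w⁰_𝐧(α) |z_𝐧(u, I(u) − ξ)| ≤ N_α^{−6s} η⁶`. -/
theorem weighted_multilinear_estimate (d r : ℕ) (hd : 1 ≤ d) (hr : 9 ≤ r)
    (G : Matrix (Fin d) (Fin d) ℝ) (hGs : G.IsSymm) (hGp : G.PosDef)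
    (C τstar : ℝ) (hadm : IsAdmissible G C τstar)
    (s : ℝ) (hs : 0 < s) (ν : ℝ) (hν : 0 < ν)
    (hνsmall : 10 ^ 8 * (2 * τstar + 1) * (d : ℝ) * (r : ℝ) * ν ≤ 1 / 10000) :
    ∃ ε₀ : ℝ, 0 < ε₀ ∧ ∀ ε : ℝ, 0 < ε → ε < ε₀ →
    ∀ M : ℝ, 2 ≤ M → M ≤ ε ^ (-ν) →
    ∀ α : ℕ, α ≤ 100 * r →
    ∀ ξ ∈ UU d s ε M, ∀ I : MultiIdx d, I.SuppIn M →
    ∀ u ∈ VV d s (20 * ε) (NNs ε s α) M ξ,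
      weight0 s (tauP s r) (Eta ε) (NNs ε s α) I *
          ‖zMono I u (fun n => ‖u n‖ ^ 2 - ξ n)‖
        ≤ NNs ε s α ^ (-(6 * s)) * Eta ε ^ (6 : ℕ) := by
  classical
  refine ⟨(1/8000 : ℝ)^(200:ℕ), by positivity, ?_⟩
  intro ε hε hεlt M hM2 hMν α hα ξ hξ I hI u hu
  obtain ⟨hξ0, hξsum, hξlt⟩ := hξ
  obtain ⟨hu0, hunorm, husum, hutsum⟩ := hu
  have hr9 : (9:ℝ) ≤ (r:ℝ) := by exact_mod_cast hr
  have hε8 : ε ≤ 1/8000 := by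
    have h1 : ((1:ℝ)/8000)^(200:ℕ) ≤ (1/8000)^(1:ℕ) :=
      pow_le_pow_of_le_one (by norm_num) (by norm_num) (by norm_num)
    have := hεlt.le.trans h1
    simpa using this
  have hε1 : ε ≤ 1 := hε8.trans (by norm_num)
  have hεkey : ε ^ ((1:ℝ)/200) ≤ 1/8000 := by
    have h1 : ε ^ ((1:ℝ)/200) ≤ (((1:ℝ)/8000)^(200:ℕ)) ^ ((1:ℝ)/200) :=
      Real.rpow_le_rpow hε.le hεlt.le (by norm_num)
    have h2 : (((1:ℝ)/8000)^(200:ℕ)) ^ ((1:ℝ)/200) = 1/8000 := by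
      rw [← Real.rpow_natCast ((1:ℝ)/8000) 200, ← Real.rpow_mul (by norm_num)]
      norm_num
    rw [h2] at h1; exact h1
  set η := Eta ε with hηdef
  set Nα := NNs ε s α with hNdef
  have hηε : η = ε ^ ((1:ℝ) - 1/100) := hηdef
  have hNε : Nα = ε ^ (-((α:ℝ)/(200*s))) := hNdef
  have hηpos : 0 < η := by rw [hηε]; exact Real.rpow_pos_of_pos hε _
  have hNpos : 0 < Nα := by rw [hNε]; exact Real.rpow_pos_of_pos hε _
  have hN1 : 1 ≤ Nα := by
    rw [hNε]
    exact Real.one_le_rpow_of_pos_of_le_one_of_nonpos hε hε1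
      (neg_nonpos.mpr (by positivity))
  have hNm : Nα ^ (-(2*s)) ≤ 1 :=
    Real.rpow_le_one_of_one_le_of_nonpos hN1 (by linarith)
  have hNmnn : 0 ≤ Nα ^ (-(2*s)) := Real.rpow_nonneg hNpos.le _
  -- ε * η⁻¹ = ε^{1/100}
  have hεη : ε * η⁻¹ = ε ^ ((1:ℝ)/100) := by
    have h1 : ε ^ ((1:ℝ)) * ε ^ (-((1:ℝ)-1/100)) = ε ^ ((1:ℝ)/100) := by
      rw [← Real.rpow_add hε]; norm_num
    rw [← h1, Real.rpow_one, hηε, ← Real.rpow_neg hε.le]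
  -- Nα^τ = ε^{-(α/(200s))·τ}
  have hNτ : Nα ^ tauP s r = ε ^ (-((α:ℝ)/(200*s)) * tauP s r) := by
    rw [hNε, ← Real.rpow_mul hε.le]
  have hτexp : -(1/2000 : ℝ) ≤ -((α:ℝ)/(200*s)) * tauP s r := by
    have hcalc : ((α:ℝ)/(200*s)) * tauP s r = (α:ℝ)/(200000*(r:ℝ)) := by
      unfold tauP; field_simp; ring
    have hαr : (α:ℝ) ≤ 100*(r:ℝ) := by exact_mod_cast hα
    have h2 : (α:ℝ)/(200000*(r:ℝ)) ≤ 1/2000 := by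
      rw [div_le_iff₀ (by linarith)]
      linarith
    linarith [hcalc, h2]
  -- the key small quantity X = ε η⁻¹ Nα^τ
  have hX : ε * η⁻¹ * Nα ^ tauP s r ≤ 1/8000 := by
    rw [hεη, hNτ, ← Real.rpow_add hε]
    calc ε ^ ((1:ℝ)/100 + -((α:ℝ)/(200*s)) * tauP s r)
        ≤ ε ^ ((1:ℝ)/200) := by
          apply Real.rpow_le_rpow_of_exponent_ge hε hε1
          linarith
      _ ≤ 1/8000 := hεkey
  have hXnn : 0 ≤ ε * η⁻¹ * Nα ^ tauP s r :=
    mul_nonneg (mul_nonneg hε.le (inv_nonneg.mpr hηpos.le)) (Real.rpow_nonneg hNpos.le _)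
  have hjnn : ∀ n : Zd d, 0 ≤ jap n := fun n => Real.sqrt_nonneg _
  -- pointwise bounds from the tsum bounds
  have hB1 : ∀ n : Zd d, jap n ^ (2*s) * |‖u n‖^2 - ξ n|
      ≤ (20*ε) ^ ((2:ℝ)+1/5) * Nα ^ (-(2*s)) :=
    fun n => le_trans (Summable.le_tsum husum n fun j _ =>
      mul_nonneg (Real.rpow_nonneg (hjnn j) _) (abs_nonneg _)) hutsum
  have hB2 : ∀ n : Zd d, jap n ^ (2*s) * |ξ n| ≤ 400 * ε^2 :=
    fun n => le_of_lt (lt_of_le_of_lt (Summable.le_tsum hξsum n fun j _ =>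
      mul_nonneg (Real.rpow_nonneg (hjnn j) _) (abs_nonneg _)) hξlt)
  have hjap1 : ∀ n : Zd d, 1 ≤ jap n := by
    intro n
    have h : (1:ℝ) ≤ 1 + ∑ i, ((n i : ℝ))^2 :=
      le_add_of_nonneg_right (Finset.sum_nonneg fun i _ => sq_nonneg _)
    calc (1:ℝ) = Real.sqrt 1 := Real.sqrt_one.symm
      _ ≤ jap n := Real.sqrt_le_sqrt h
  have hjapp : ∀ n : Zd d, 1 ≤ jap n ^ (2*s) := by
    intro n
    rw [← Real.one_rpow (2*s)]
    exact Real.rpow_le_rpow zero_le_one (hjap1 n) (by positivity)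
  have h202 : (20*ε) ^ ((2:ℝ)+1/5) ≤ 400 * ε^2 := by
    have h1 : (20*ε) ^ ((2:ℝ)+1/5) = (20*ε)^(2:ℕ) * (20*ε) ^ ((1:ℝ)/5) := by
      rw [Real.rpow_add (by positivity), show ((2:ℝ)) = ((2:ℕ):ℝ) by norm_num,
        Real.rpow_natCast]
    have h2 : (20*ε) ^ ((1:ℝ)/5) ≤ 1 :=
      Real.rpow_le_one (by positivity) (by linarith) (by norm_num)
    have h3 : (0:ℝ) ≤ (20*ε)^(2:ℕ) := by positivity
    calc (20*ε) ^ ((2:ℝ)+1/5) = (20*ε)^(2:ℕ) * (20*ε) ^ ((1:ℝ)/5) := h1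
      _ ≤ (20*ε)^(2:ℕ) * 1 := mul_le_mul_of_nonneg_left h2 h3
      _ = 400 * ε^2 := by ring
  have hu2 : ∀ n : Zd d, jap n ^ (2*s) * ‖u n‖^2 ≤ 800 * ε^2 := by
    intro n
    have h3 : ‖u n‖^2 ≤ |‖u n‖^2 - ξ n| + |ξ n| := by
      calc ‖u n‖^2 = (‖u n‖^2 - ξ n) + ξ n := by ring
        _ ≤ |‖u n‖^2 - ξ n| + |ξ n| := add_le_add (le_abs_self _) (le_abs_self _)
    have hjn : (0:ℝ) ≤ jap n ^ (2*s) := by linarith [hjapp n]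
    have h4 : (20*ε) ^ ((2:ℝ)+1/5) * Nα ^ (-(2*s)) ≤ 400 * ε^2 := by
      calc (20*ε) ^ ((2:ℝ)+1/5) * Nα ^ (-(2*s))
          ≤ (400*ε^2) * Nα ^ (-(2*s)) := mul_le_mul_of_nonneg_right h202 hNmnn
        _ ≤ (400*ε^2) * 1 := mul_le_mul_of_nonneg_left hNm (by positivity)
        _ = 400*ε^2 := mul_one _
    calc jap n ^ (2*s) * ‖u n‖^2
        ≤ jap n ^ (2*s) * (|‖u n‖^2 - ξ n| + |ξ n|) := mul_le_mul_of_nonneg_left h3 hjn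
      _ = jap n ^ (2*s) * |‖u n‖^2 - ξ n| + jap n ^ (2*s) * |ξ n| := by ring
      _ ≤ (20*ε) ^ ((2:ℝ)+1/5) * Nα ^ (-(2*s)) + 400*ε^2 := add_le_add (hB1 n) (hB2 n)
      _ ≤ 400*ε^2 + 400*ε^2 := by linarith [h4]
      _ = 800*ε^2 := by ring
  have habs : ∀ n : Zd d, |‖u n‖^2 - ξ n| ≤ (20*ε) ^ ((2:ℝ)+1/5) * Nα ^ (-(2*s)) := by
    intro n
    calc |‖u n‖^2 - ξ n| = 1 * |‖u n‖^2 - ξ n| := (one_mul _).symm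
      _ ≤ jap n ^ (2*s) * |‖u n‖^2 - ξ n| :=
          mul_le_mul_of_nonneg_right (hjapp n) (abs_nonneg _)
      _ ≤ (20*ε) ^ ((2:ℝ)+1/5) * Nα ^ (-(2*s)) := hB1 n
  -- the C-weight factor bound
  have hCnn : ∀ n : Zd d, 0 ≤ Cw s (tauP s r) η Nα n := by
    intro n
    unfold Cw
    have : (0:ℝ) ≤ min (enorm n) Nα := le_min (Real.sqrt_nonneg _) hNpos.le
    have h1 : (0:ℝ) ≤ (min (enorm n) Nα) ^ s := Real.rpow_nonneg this s
    have h2 : (0:ℝ) ≤ Nα ^ tauP s r := Real.rpow_nonneg hNpos.le _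
    positivity
  have hCfac : ∀ n : Zd d, Cw s (tauP s r) η Nα n * ‖u n‖ ≤ 1 := by
    intro n
    set m := min (enorm n) Nα with hmdef
    have hm0 : (0:ℝ) ≤ m := le_min (Real.sqrt_nonneg _) hNpos.le
    have hmj : m ≤ jap n := by
      refine le_trans (min_le_left _ _) ?_
      unfold enorm jap
      exact Real.sqrt_le_sqrt (by linarith [sq_nonneg (1:ℝ)])
    have hjpos : 0 < jap n := lt_of_lt_of_le one_pos (hjap1 n)
    have e2 : (m^s)^(2:ℕ) ≤ jap n ^ (2*s) := by
      have hms : m ^ s ≤ jap n ^ s := Real.rpow_le_rpow hm0 hmj hs.le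
      calc (m^s)^(2:ℕ) ≤ (jap n ^ s)^(2:ℕ) :=
            pow_le_pow_left₀ (Real.rpow_nonneg hm0 s) hms 2
        _ = jap n ^ (2*s) := by rw [pow_two, ← Real.rpow_add hjpos]; congr 1; ring
    have e1 : (m^s)^(2:ℕ) * ‖u n‖^2 ≤ 800 * ε^2 := by
      calc (m^s)^(2:ℕ) * ‖u n‖^2 ≤ jap n ^ (2*s) * ‖u n‖^2 :=
            mul_le_mul_of_nonneg_right e2 (by positivity)
        _ ≤ 800*ε^2 := hu2 n
    have hsq : (Cw s (tauP s r) η Nα n * ‖u n‖)^(2:ℕ)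
        ≤ 800 * (ε * η⁻¹ * Nα ^ tauP s r)^(2:ℕ) := by
      have lhs_eq : (Cw s (tauP s r) η Nα n * ‖u n‖)^(2:ℕ)
          = (η⁻¹)^(2:ℕ) * (Nα ^ tauP s r)^(2:ℕ) * ((m^s)^(2:ℕ) * ‖u n‖^2) := by
        unfold Cw; rw [← hmdef]; ring
      have rhs_eq : 800 * (ε * η⁻¹ * Nα ^ tauP s r)^(2:ℕ)
          = (η⁻¹)^(2:ℕ) * (Nα ^ tauP s r)^(2:ℕ) * (800 * ε^2) := by ring
      rw [lhs_eq, rhs_eq]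
      apply mul_le_mul_of_nonneg_left e1
      positivity
    have hXsq : 800 * (ε * η⁻¹ * Nα ^ tauP s r)^(2:ℕ) ≤ 1 := by
      nlinarith [hX, hXnn]
    nlinarith [hCnn n, norm_nonneg (u n), mul_nonneg (hCnn n) (norm_nonneg (u n)),
      sq_nonneg (Cw s (tauP s r) η Nα n * ‖u n‖ - 1)]
  -- the D-weight factor bound
  have hDnn : 0 ≤ Dw s η Nα := by
    unfold Dw
    have h1 : (0:ℝ) ≤ η ^ (-(2+1/5) : ℝ) := Real.rpow_nonneg hηpos.le _
    have h2 : (0:ℝ) ≤ Nα ^ (2*s) := Real.rpow_nonneg hNpos.le _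
    positivity
  have hDfac : ∀ n : Zd d, Dw s η Nα * |‖u n‖^2 - ξ n| ≤ 1 := by
    intro n
    have step1 : Nα ^ (2*s) * Nα ^ (-(2*s)) = 1 := by
      rw [← Real.rpow_add hNpos]; norm_num
    have step2 : Dw s η Nα * ((20*ε) ^ ((2:ℝ)+1/5) * Nα ^ (-(2*s)))
        = η ^ (-(2+1/5) : ℝ) * (20*ε) ^ ((2:ℝ)+1/5) := by
      unfold Dw
      calc η ^ (-(2+1/5) : ℝ) * Nα ^ (2*s) * ((20*ε) ^ ((2:ℝ)+1/5) * Nα ^ (-(2*s)))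
          = η ^ (-(2+1/5) : ℝ) * (20*ε) ^ ((2:ℝ)+1/5) * (Nα ^ (2*s) * Nα ^ (-(2*s))) := by ring
        _ = η ^ (-(2+1/5) : ℝ) * (20*ε) ^ ((2:ℝ)+1/5) := by rw [step1, mul_one]
    have step3 : η ^ (-(2+1/5) : ℝ) * (20*ε) ^ ((2:ℝ)+1/5)
        = (20 * (ε * η⁻¹)) ^ ((2:ℝ)+1/5) := by
      conv_rhs => rw [show (20 * (ε * η⁻¹)) = (20*ε)*η⁻¹ by ring,
        Real.mul_rpow (by positivity) (by positivity),
        Real.inv_rpow hηpos.le, ← Real.rpow_neg hηpos.le]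
      ring
    have step4 : (20 * (ε * η⁻¹)) ^ ((2:ℝ)+1/5)
        = (20:ℝ) ^ ((2:ℝ)+1/5) * ε ^ ((1/100 : ℝ) * ((2:ℝ)+1/5)) := by
      rw [hεη, Real.mul_rpow (by norm_num) (Real.rpow_nonneg hε.le _),
        ← Real.rpow_mul hε.le]
    have step5 : (20:ℝ) ^ ((2:ℝ)+1/5) ≤ 8000 := by
      calc (20:ℝ) ^ ((2:ℝ)+1/5) ≤ (20:ℝ) ^ ((3:ℕ):ℝ) :=
            Real.rpow_le_rpow_of_exponent_le (by norm_num) (by norm_num)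
        _ = 8000 := by rw [Real.rpow_natCast]; norm_num
    have step6 : ε ^ ((1/100 : ℝ) * ((2:ℝ)+1/5)) ≤ 1/8000 := by
      calc ε ^ ((1/100 : ℝ) * ((2:ℝ)+1/5)) ≤ ε ^ ((1:ℝ)/200) :=
            Real.rpow_le_rpow_of_exponent_ge hε hε1 (by norm_num)
        _ ≤ 1/8000 := hεkey
    calc Dw s η Nα * |‖u n‖^2 - ξ n|
        ≤ Dw s η Nα * ((20*ε) ^ ((2:ℝ)+1/5) * Nα ^ (-(2*s))) :=
          mul_le_mul_of_nonneg_left (habs n) hDnn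
      _ = (20:ℝ) ^ ((2:ℝ)+1/5) * ε ^ ((1/100 : ℝ) * ((2:ℝ)+1/5)) := by
          rw [step2, step3, step4]
      _ ≤ 8000 * (1/8000) := by
          apply mul_le_mul step5 step6 (Real.rpow_nonneg hε.le _) (by norm_num)
      _ = 1 := by norm_num
  -- norm of the monomial
  have hnorm : ‖zMono I u (fun n => ‖u n‖^2 - ξ n)‖
      = (I.kk.prod fun n e => ‖u n‖^e) * (I.ll.prod fun n e => ‖u n‖^e)
        * (I.mm.prod fun n e => |‖u n‖^2 - ξ n|^e) := by
    simp only [zMono, Finsupp.prod, norm_mul, norm_prod, norm_pow,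
      RingHomIsometric.norm_map, Complex.norm_real, Real.norm_eq_abs]
  -- combine everything
  set τ := tauP s r with hτdef
  have hA : (0:ℝ) ≤ Nα ^ (-(6*s)) * η^(6:ℕ) := by
    have := Real.rpow_nonneg hNpos.le (-(6*s))
    positivity
  have hmk := prod_merge I.kk (fun n => Cw s τ η Nα n) (fun n => ‖u n‖)
  have hml := prod_merge I.ll (fun n => Cw s τ η Nα n) (fun n => ‖u n‖)
  have hmm := prod_merge I.mm (fun _ => Dw s η Nα) (fun n => |‖u n‖^2 - ξ n|)
  have hk1 : (I.kk.prod fun n e => (Cw s τ η Nα n * ‖u n‖)^e) ≤ 1 :=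
    prod_le_one' _ _ (fun n => mul_nonneg (hCnn n) (norm_nonneg _)) hCfac
  have hk0 : 0 ≤ (I.kk.prod fun n e => (Cw s τ η Nα n * ‖u n‖)^e) :=
    prod_nonneg' _ _ (fun n => mul_nonneg (hCnn n) (norm_nonneg _))
  have hl1 : (I.ll.prod fun n e => (Cw s τ η Nα n * ‖u n‖)^e) ≤ 1 :=
    prod_le_one' _ _ (fun n => mul_nonneg (hCnn n) (norm_nonneg _)) hCfac
  have hl0 : 0 ≤ (I.ll.prod fun n e => (Cw s τ η Nα n * ‖u n‖)^e) :=
    prod_nonneg' _ _ (fun n => mul_nonneg (hCnn n) (norm_nonneg _))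
  have hm1 : (I.mm.prod fun n e => (Dw s η Nα * |‖u n‖^2 - ξ n|)^e) ≤ 1 :=
    prod_le_one' _ _ (fun n => mul_nonneg hDnn (abs_nonneg _)) hDfac
  have hm0 : 0 ≤ (I.mm.prod fun n e => (Dw s η Nα * |‖u n‖^2 - ξ n|)^e) :=
    prod_nonneg' _ _ (fun n => mul_nonneg hDnn (abs_nonneg _))
  calc weight0 s τ η Nα I * ‖zMono I u (fun n => ‖u n‖ ^ 2 - ξ n)‖
      = (Nα ^ (-(6*s)) * η^(6:ℕ)) *
        ((I.kk.prod fun n e => (Cw s τ η Nα n * ‖u n‖)^e)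
          * (I.ll.prod fun n e => (Cw s τ η Nα n * ‖u n‖)^e)
          * (I.mm.prod fun n e => (Dw s η Nα * |‖u n‖^2 - ξ n|)^e)) := by
        rw [← hmk, ← hml, ← hmm]
        simp only [weight0, hnorm]
        ring
    _ ≤ (Nα ^ (-(6*s)) * η^(6:ℕ)) * 1 := by
        apply mul_le_mul_of_nonneg_left _ hA
        exact mul_le_one₀ (mul_le_one₀ hk1 hl0 hl1) hm0 hm1
    _ = Nα ^ (-(6*s)) * η^(6:ℕ) := mul_one _


end NLSPaper
end

section
/- Monotonicity of the weights across scales for monomials of degree ≥ 6 with no low unpaired frequency. Under the standing parameter conventions, define Λ_α := {𝐧 ∈ 𝔑∖𝔍 : 𝐧₋ < N_α}. For every α ≥ 0 and every 𝐧 ∈ 𝔑∖Λ_{α+1} with deg(𝐧) ≥ 6, one has w⁰_𝐧(α) ≤ w⁰_𝐧(α+1) and w¹_𝐧(α) ≤ w¹_𝐧(α+1). -/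
/-!
Every unpaired frequency `n` of `𝐧 ∉ Λ_{α+1}` satisfies `|n| ≥ N_{α+1} ≥ N_α`, so at both scales
`min(|n|, N) = N` and the weight collapses to a scale-free constant times the single power
`N ^ (s (deg 𝐧 - b) + τ Σ (k_n + ℓ_n))`, with `b = 6` for `w⁰` and `b = 4` for `w¹`.
For `deg 𝐧 ≥ 6` this exponent is nonnegative, and `N_α ≤ N_{α+1}`.
-/

open scoped BigOperators
open Finset

namespace NLSPaper

variable {d : ℕ}

theorem NNs_pos {ε : ℝ} (hε : 0 < ε) (s : ℝ) (α : ℕ) : 0 < NNs ε s α :=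
  Real.rpow_pos_of_pos hε _

theorem NNs_monotone {ε s : ℝ} (hε : 0 < ε) (hε1 : ε ≤ 1) (hs : 0 ≤ s) :
    Monotone (NNs ε s) := fun α β hαβ =>
  Real.rpow_le_rpow_of_exponent_ge hε hε1 <| neg_le_neg <|
    div_le_div_of_nonneg_right (by exact_mod_cast hαβ) (by positivity)

theorem tauP_nonneg {s : ℝ} (hs : 0 ≤ s) (r : ℕ) : 0 ≤ tauP s r := by
  unfold tauP
  positivity

namespace MultiIdx

theorem nminus_le_enorm (I : MultiIdx d) {n : Zd d} (hn : 1 ≤ I.kk n + I.ll n) :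
    I.nminus ≤ enorm n :=
  csInf_le ⟨0, by rintro _ ⟨m, -, rfl⟩; exact Real.sqrt_nonneg _⟩ ⟨n, hn, rfl⟩

theorem not_integrable_of_unpaired (I : MultiIdx d) {n : Zd d} (hn : 1 ≤ I.kk n + I.ll n) :
    ¬ I.Integrable := by
  rintro ⟨hk, hl⟩
  simp [hk, hl] at hn

theorem le_enorm_of_unpaired (I : MultiIdx d) {N : ℝ}
    (hI : ¬ (¬ I.Integrable ∧ I.nminus < N)) {n : Zd d} (hn : 1 ≤ I.kk n + I.ll n) :
    N ≤ enorm n :=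
  (not_lt.mp fun h => hI ⟨I.not_integrable_of_unpaired hn, h⟩).trans (I.nminus_le_enorm hn)

end MultiIdx

noncomputable def weightOfDeg (b : ℕ) (s τ η N : ℝ) (I : MultiIdx d) : ℝ :=
  N ^ (-((b : ℝ) * s)) * η ^ b *
    ((I.mm.prod fun _ e => Dw s η N ^ e) *
      (I.kk.prod fun n e => Cw s τ η N n ^ e) *
      (I.ll.prod fun n e => Cw s τ η N n ^ e))

theorem weight0_eq_weightOfDeg (s τ η N : ℝ) (I : MultiIdx d) :
    weight0 s τ η N I = weightOfDeg 6 s τ η N I := by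
  norm_num [weight0, weightOfDeg]

theorem weight1_eq_weightOfDeg (s τ η N : ℝ) (I : MultiIdx d) :
    weight1 s τ η N I = weightOfDeg 4 s τ η N I := by
  norm_num [weight1, weightOfDeg]

theorem Cw_eq_of_le_enorm (s τ η : ℝ) {N : ℝ} {n : Zd d} (h : N ≤ enorm n) :
    Cw s τ η N n = η⁻¹ * N ^ s * N ^ τ := by
  rw [Cw, min_eq_right h]

theorem prod_const_pow_eq_pow_sum {ι M : Type*} [CommMonoid M] (f : ι →₀ ℕ) (c : M) :
    (f.prod fun _ e => c ^ e) = c ^ f.sum fun _ e => e :=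
  Finset.prod_pow_eq_pow_sum _ _ _

theorem prod_Cw_eq_pow_sum (s τ η : ℝ) {N : ℝ} (f : Zd d →₀ ℕ)
    (hf : ∀ n ∈ f.support, N ≤ enorm n) :
    (f.prod fun n e => Cw s τ η N n ^ e) = (η⁻¹ * N ^ s * N ^ τ) ^ f.sum fun _ e => e := by
  rw [← prod_const_pow_eq_pow_sum]
  exact Finset.prod_congr rfl fun n hn => by dsimp only; rw [Cw_eq_of_le_enorm s τ η (hf n hn)]

theorem weightOfDeg_eq_mul_rpow (b : ℕ) (s τ η : ℝ) {N : ℝ} (hN : 0 < N) (I : MultiIdx d)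
    (hI : ∀ n, 1 ≤ I.kk n + I.ll n → N ≤ enorm n) :
    weightOfDeg b s τ η N I =
      η ^ b * (η ^ (-(2 + 1/5) : ℝ)) ^ (I.mm.sum fun _ e => e) *
          η⁻¹ ^ ((I.kk.sum fun _ e => e) + I.ll.sum fun _ e => e) *
        N ^ (-((b : ℝ) * s) + 2 * s * ((I.mm.sum fun _ e => e : ℕ) : ℝ) +
          (s + τ) * (((I.kk.sum fun _ e => e) + (I.ll.sum fun _ e => e) : ℕ) : ℝ)) := by
  have hk : ∀ n ∈ I.kk.support, N ≤ enorm n := fun n hn =>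
    hI n (by have := Finsupp.mem_support_iff.mp hn; omega)
  have hl : ∀ n ∈ I.ll.support, N ≤ enorm n := fun n hn =>
    hI n (by have := Finsupp.mem_support_iff.mp hn; omega)
  rw [weightOfDeg, prod_const_pow_eq_pow_sum, prod_Cw_eq_pow_sum s τ η _ hk,
    prod_Cw_eq_pow_sum s τ η _ hl, Dw]
  generalize (I.mm.sum fun _ e => e) = m, (I.kk.sum fun _ e => e) = K,
    (I.ll.sum fun _ e => e) = L
  rw [Real.rpow_add hN, Real.rpow_add hN, Real.rpow_mul hN.le (2 * s) m,
    Real.rpow_mul hN.le (s + τ) ↑(K + L), Real.rpow_natCast, Real.rpow_natCast, Real.rpow_add hN]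
  ring

theorem weightOfDeg_mono {b : ℕ} {s τ η N N' : ℝ} (hs : 0 ≤ s) (hτ : 0 ≤ τ) (hη : 0 ≤ η)
    {I : MultiIdx d} (hb : b ≤ I.deg) (hN : 0 < N) (hNN' : N ≤ N')
    (hI : ∀ n, 1 ≤ I.kk n + I.ll n → N' ≤ enorm n) :
    weightOfDeg b s τ η N I ≤ weightOfDeg b s τ η N' I := by
  rw [weightOfDeg_eq_mul_rpow b s τ η hN I fun n hn => hNN'.trans (hI n hn),
    weightOfDeg_eq_mul_rpow b s τ η (hN.trans_le hNN') I hI]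
  rw [MultiIdx.deg] at hb
  generalize (I.mm.sum fun _ e => e) = m, (I.kk.sum fun _ e => e) = K,
    (I.ll.sum fun _ e => e) = L at hb ⊢
  have hb' : (b : ℝ) ≤ K + L + 2 * m := by exact_mod_cast hb
  have hKL : (0 : ℝ) ≤ ((K + L : ℕ) : ℝ) := Nat.cast_nonneg _
  gcongr
  push_cast at hKL ⊢
  nlinarith [mul_nonneg hτ hKL]

theorem weight_monotone_scales_general (d r : ℕ)
    (s : ℝ) (hs : 0 < s) (ε : ℝ) (hε : 0 < ε) (hε1 : ε < 1)
    (α : ℕ) (I : MultiIdx d)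
    (hnotLam : ¬ (¬ I.Integrable ∧ I.nminus < NNs ε s (α + 1)))
    (hdeg : 6 ≤ I.deg) :
    weight0 s (tauP s r) (Eta ε) (NNs ε s α) I
      ≤ weight0 s (tauP s r) (Eta ε) (NNs ε s (α + 1)) I ∧
    weight1 s (tauP s r) (Eta ε) (NNs ε s α) I
      ≤ weight1 s (tauP s r) (Eta ε) (NNs ε s (α + 1)) I := by
  have mono : ∀ b ≤ I.deg, weightOfDeg b s (tauP s r) (Eta ε) (NNs ε s α) I ≤
      weightOfDeg b s (tauP s r) (Eta ε) (NNs ε s (α + 1)) I := fun b hb =>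
    weightOfDeg_mono hs.le (tauP_nonneg hs.le r) (Real.rpow_nonneg hε.le _) hb (NNs_pos hε s α)
      (NNs_monotone hε hε1.le hs.le α.le_succ) fun _ hn => I.le_enorm_of_unpaired hnotLam hn
  simp only [weight0_eq_weightOfDeg, weight1_eq_weightOfDeg]
  exact ⟨mono 6 hdeg, mono 4 (by omega)⟩

/-- **Monotonicity of the weights across scales** (Lemma 4.6): for `𝐧 ∈ 𝔑 ∖ Λ_{α+1}`
with `deg 𝐧 ≥ 6`, the weights `w⁰` and `w¹` are nondecreasing from scale `α`
to scale `α+1`. Here `Λ_{α+1} = {𝐧 ∈ 𝔑 ∖ 𝔍 : 𝐧₋ < N_{α+1}}`. -/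
theorem weight_monotone_scales (d r : ℕ) (hd : 1 ≤ d) (hr : 9 ≤ r)
    (s : ℝ) (hs : 0 < s) (ε : ℝ) (hε : 0 < ε) (hε1 : ε < 1)
    (M : ℝ) (hM : 2 ≤ M) (α : ℕ) (I : MultiIdx d)
    (hmom : I.IsMom) (hsupp : I.SuppIn M)
    (hnotLam : ¬ (¬ I.Integrable ∧ I.nminus < NNs ε s (α + 1)))
    (hdeg : 6 ≤ I.deg) :
    weight0 s (tauP s r) (Eta ε) (NNs ε s α) I
      ≤ weight0 s (tauP s r) (Eta ε) (NNs ε s (α + 1)) I ∧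
    weight1 s (tauP s r) (Eta ε) (NNs ε s α) I
      ≤ weight1 s (tauP s r) (Eta ε) (NNs ε s (α + 1)) I :=
  weight_monotone_scales_general d r s hs ε hε hε1 α I hnotLam hdeg

end NLSPaper
end
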